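/- arXiv:0906.5305 — 8 statements merged into one kernel-verified Lean document; each statement's English description precedes it below -/
import Mathlib

section
/- For every t ∈ ℝ, the integral identity ∫_{ℝ} e^{i t s} / (2 cosh(π s)) ds = 1/(e^{t/2} + e^{-t/2}) holds; equivalently, for every ξ ∈ ℝ, ∫_{ℝ} (e^{s/2}+e^{-s/2})^{-1} e^{-2πiξs} ds = π / cosh(2π²ξ). -/
open Real Complex MeasureTheory

noncomputable section

lemma key (t : ℝ) :
    (∫ s : ℝ, Complex.exp (Complex.I * t * s) / (2 * Real.cosh (π * s)))
      = 1 / (2 * Real.cosh (t / 2)) := by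
  have hπ : (0:ℝ) < π := Real.pi_pos
  set w : ℂ := ((t / (2 * π) : ℝ) : ℂ) * Complex.I with hw
  set g : ℝ → ℝ := fun u => (Real.log (1 - u) - Real.log u) / (2 * π) with hg
  set g' : ℝ → ℝ := fun u => -(1 / (2 * π * (u * (1 - u)))) with hg'
  have hmeas : MeasurableSet (Set.Ioo (0:ℝ) 1) := measurableSet_Ioo
  -- derivative
  have hderiv : ∀ u ∈ Set.Ioo (0:ℝ) 1, HasDerivWithinAt g (g' u) (Set.Ioo 0 1) u := by
    intro u hu
    obtain ⟨hu0, hu1⟩ := hu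
    have h1u : (0:ℝ) < 1 - u := by linarith
    have d1 : HasDerivAt (fun u : ℝ => Real.log (1 - u)) ((-1) / (1 - u)) u := by
      have h : HasDerivAt (fun u : ℝ => 1 - u ) (-1) u := by
        simpa using (hasDerivAt_id u).const_sub 1
      simpa using h.log h1u.ne'
    have d2 : HasDerivAt Real.log u⁻¹ u := Real.hasDerivAt_log hu0.ne'
    have d3 : HasDerivAt g (((-1) / (1 - u) - u⁻¹) / (2 * π)) u := (d1.sub d2).div_const _
    have he : ((-1) / (1 - u) - u⁻¹) / (2 * π) = g' u := by
      rw [hg']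
      field_simp
      ring
    rw [he] at d3
    exact d3.hasDerivWithinAt
  -- injectivity
  have hinj : Set.InjOn g (Set.Ioo 0 1) := by
    intro u hu v hv huv
    have h1u : (0:ℝ) < 1 - u := by linarith [hu.2]
    have h1v : (0:ℝ) < 1 - v := by linarith [hv.2]
    have h : Real.log (1 - u) - Real.log u = Real.log (1 - v) - Real.log v := by
      have := huv
      rw [hg] at this
      simp only at this
      field_simp at this
      linarith
    have h2 := congrArg Real.exp h
    rw [Real.exp_sub, Real.exp_sub, Real.exp_log h1u, Real.exp_log hu.1,
      Real.exp_log h1v, Real.exp_log hv.1] at h2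
    have hu0 := hu.1
    have hv0 := hv.1
    field_simp at h2
    nlinarith [h2]
  -- surjectivity
  have himg : g '' Set.Ioo 0 1 = Set.univ := by
    apply Set.eq_univ_of_forall
    intro s
    have hE : (0:ℝ) < Real.exp (2 * π * s) := Real.exp_pos _
    have hD : (0:ℝ) < 1 + Real.exp (2 * π * s) := by linarith
    refine ⟨1 / (1 + Real.exp (2 * π * s)), ⟨by positivity, ?_⟩, ?_⟩
    · rw [div_lt_one hD]; linarith
    · have h1 : (1:ℝ) - 1 / (1 + Real.exp (2 * π * s))
          = Real.exp (2 * π * s) / (1 + Real.exp (2 * π * s)) := by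
        field_simp
        ring
      rw [hg]
      simp only
      rw [h1, Real.log_div hE.ne' hD.ne', one_div, Real.log_inv, Real.log_exp]
      field_simp
      ring
  -- change of variables
  have step1 : (∫ s : ℝ, Complex.exp (Complex.I * t * s) / (2 * Real.cosh (π * s)))
      = ∫ u in Set.Ioo (0:ℝ) 1,
          |g' u| • (Complex.exp (Complex.I * t * (g u)) / (2 * Real.cosh (π * g u))) := by
    rw [← MeasureTheory.setIntegral_univ, ← himg,
      integral_image_eq_integral_abs_deriv_smul hmeas hderiv hinj]
  -- pointwise identification with Beta integrand
  have step2 : ∀ u ∈ Set.Ioo (0:ℝ) 1,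
      |g' u| • (Complex.exp (Complex.I * t * (g u)) / (2 * Real.cosh (π * g u)))
        = (1 / (2 * π) : ℂ) *
          ((u : ℂ) ^ ((1/2 - w) - 1) * (1 - (u : ℂ)) ^ ((1/2 + w) - 1)) := by
    intro u hu
    obtain ⟨hu0, hu1⟩ := hu
    have h1u : (0:ℝ) < 1 - u := by linarith
    set L1 := Real.log (1 - u) with hL1
    set L2 := Real.log u with hL2
    set A := Real.exp (L1 / 2) with hA
    set B := Real.exp (L2 / 2) with hB
    have hA0 : 0 < A := Real.exp_pos _
    have hB0 : 0 < B := Real.exp_pos _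
    have hA2 : A * A = 1 - u := by
      rw [hA, ← Real.exp_add]
      rw [show L1 / 2 + L1 / 2 = L1 by ring, hL1, Real.exp_log h1u]
    have hB2 : B * B = u := by
      rw [hB, ← Real.exp_add]
      rw [show L2 / 2 + L2 / 2 = L2 by ring, hL2, Real.exp_log hu0]
    have habs : |g' u| = 1 / (2 * π * (u * (1 - u))) := by
      rw [hg']
      rw [abs_neg, abs_of_pos (by positivity)]
    have hgu : g u = (L1 - L2) / (2 * π) := rfl
    have hπgu : π * g u = (L1 - L2) / 2 := by
      rw [hgu]; field_simp
    have hcosh : Real.cosh (π * g u) = 1 / (2 * (A * B)) := by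
      rw [hπgu, Real.cosh_eq]
      have e1 : Real.exp ((L1 - L2) / 2) = A / B := by
        rw [eq_div_iff hB0.ne', hA, hB, ← Real.exp_add]
        congr 1; ring
      have e2 : Real.exp (-((L1 - L2) / 2)) = B / A := by
        rw [eq_div_iff hA0.ne', hA, hB, ← Real.exp_add]
        congr 1; ring
      have hsum : A * A + B * B = 1 := by rw [hA2, hB2]; ring
      rw [e1, e2, div_add_div _ _ hB0.ne' hA0.ne', hsum]
      rw [one_div, one_div, mul_comm B A]
      ring
    have hexp : Complex.exp (Complex.I * t * (g u)) = Complex.exp (w * (L1 - L2)) := by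
      congr 1
      rw [hgu, hw]
      push_cast
      have : (π : ℂ) ≠ 0 := Complex.ofReal_ne_zero.mpr hπ.ne'
      field_simp
      try ring
      try tauto
    have hcu : (u : ℂ) ^ ((1/2 - w) - 1) = Complex.exp (((1/2 - w) - 1) * L2) := by
      rw [Complex.cpow_def_of_ne_zero (by exact_mod_cast hu0.ne'),
        ← Complex.ofReal_log hu0.le, mul_comm]
    have hcv : (1 - (u : ℂ)) ^ ((1/2 + w) - 1) = Complex.exp (((1/2 + w) - 1) * L1) := by
      have : (1 - (u : ℂ)) = ((1 - u : ℝ) : ℂ) := by push_cast; ring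
      rw [this, Complex.cpow_def_of_ne_zero (by exact_mod_cast h1u.ne'),
        ← Complex.ofReal_log h1u.le, mul_comm]
    rw [habs, hexp, hcosh, hcu, hcv]
    rw [← Complex.exp_add]
    have hsplit : ((1/2 - w) - 1) * (L2 : ℂ) + ((1/2 + w) - 1) * (L1 : ℂ)
        = w * ((L1 : ℂ) - L2) + ((-( (L1 + L2) / 2) : ℝ) : ℂ) := by
      push_cast; ring
    rw [hsplit, Complex.exp_add, ← Complex.ofReal_exp]
    have hABexp : Real.exp (-((L1 + L2) / 2)) = 1 / (A * B) := by
      rw [hA, hB, ← Real.exp_add, eq_div_iff (by positivity), ← Real.exp_add]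
      rw [show -((L1 + L2)/2) + (L1/2 + L2/2) = 0 by ring, Real.exp_zero]
    rw [hABexp]
    rw [real_smul]
    rw [← hA2, ← hB2]
    have hA0' : (A : ℂ) ≠ 0 := Complex.ofReal_ne_zero.mpr hA0.ne'
    have hB0' : (B : ℂ) ≠ 0 := Complex.ofReal_ne_zero.mpr hB0.ne'
    have hπ' : (π : ℂ) ≠ 0 := Complex.ofReal_ne_zero.mpr hπ.ne'
    push_cast
    field_simp [hA0', hB0', hπ']
  have step3 : (∫ u in Set.Ioo (0:ℝ) 1,
        |g' u| • (Complex.exp (Complex.I * t * (g u)) / (2 * Real.cosh (π * g u))))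
      = (1 / (2 * π) : ℂ) * Complex.betaIntegral (1/2 - w) (1/2 + w) := by
    rw [setIntegral_congr_fun hmeas step2, MeasureTheory.integral_const_mul]
    congr 1
    rw [Complex.betaIntegral, intervalIntegral.integral_of_le zero_le_one,
      MeasureTheory.integral_Ioc_eq_integral_Ioo]
  have hre : w.re = 0 := by
    rw [hw]
    simp [Complex.div_im, Complex.div_re]
  have hre1 : ((1:ℂ)/2 - w).re = 1/2 := by simp [Complex.sub_re, hre]
  have hre2 : ((1:ℂ)/2 + w).re = 1/2 := by simp [Complex.add_re, hre]
  have hβ : Complex.betaIntegral (1/2 - w) (1/2 + w)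
      = Complex.Gamma (1/2 - w) * Complex.Gamma (1/2 + w) := by
    have h := Complex.Gamma_mul_Gamma_eq_betaIntegral
      (s := 1/2 - w) (t := 1/2 + w) (by rw [hre1]; norm_num) (by rw [hre2]; norm_num)
    rw [show (1/2 - w) + (1/2 + w) = 1 by ring, Complex.Gamma_one, one_mul] at h
    exact h.symm
  have hπc' : (π : ℂ) ≠ 0 := Complex.ofReal_ne_zero.mpr hπ.ne'
  have hrefl : Complex.Gamma (1/2 - w) * Complex.Gamma (1/2 + w)
      = (π : ℂ) / Real.cosh (t / 2) := by
    have h := Complex.Gamma_mul_Gamma_one_sub (1/2 - w)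
    rw [show (1:ℂ) - (1/2 - w) = 1/2 + w by ring] at h
    rw [h]
    congr 1
    rw [show (π:ℂ) * (1/2 - w) = ↑π/2 - ↑π * w by ring, Complex.sin_pi_div_two_sub]
    have hπw : (π:ℂ) * w = ((t/2 : ℝ):ℂ) * Complex.I := by
      rw [hw]; push_cast; field_simp [hπc']
    rw [hπw]
    rw [Complex.cos_mul_I, Complex.ofReal_cosh]
  rw [step1, step3, hβ, hrefl]
  have hc : (Real.cosh (t/2) : ℂ) ≠ 0 := by
    exact_mod_cast (Real.cosh_pos (x := t/2)).ne'
  rw [div_mul_div_comm, one_mul,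
    show (2*(π:ℂ)) * ↑(Real.cosh (t/2)) = ↑π * (2*↑(Real.cosh (t/2))) by ring,
    ← div_div, div_self hπc', one_div]

theorem stmt_0 :
    (∀ t : ℝ, (∫ s : ℝ, Complex.exp (Complex.I * t * s) / (2 * Real.cosh (π * s)))
        = 1 / (Real.exp (t / 2) + Real.exp (-(t / 2)))) ∧
    (∀ ξ : ℝ, (∫ s : ℝ, (1 / ((Real.exp (s / 2) + Real.exp (-(s / 2))) : ℂ)) *
          Complex.exp (-(2 * π * Complex.I * ξ * s)))
        = π / Real.cosh (2 * π ^ 2 * ξ)) := by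
  constructor
  · intro t
    rw [key t, Real.cosh_eq]
    push_cast
    ring
  · intro ξ
    have hπ : (0:ℝ) < π := Real.pi_pos
    have hπc : (π:ℂ) ≠ 0 := Complex.ofReal_ne_zero.mpr hπ.ne'
    have hfun : (fun s : ℝ => (1 / ((Real.exp (s / 2) + Real.exp (-(s / 2))) : ℂ)) *
          Complex.exp (-(2 * π * Complex.I * ξ * s)))
        = fun s => (fun σ : ℝ => Complex.exp (Complex.I * ((-(4*π^2*ξ) : ℝ)) * σ)
            / (2 * Real.cosh (π * σ))) ((2*π)⁻¹ * s) := by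
      funext s
      simp only
      have h1 : π * ((2*π)⁻¹ * s) = s/2 := by field_simp
      have h2 : (Complex.I * ((-(4*π^2*ξ):ℝ):ℂ) * (((2*π)⁻¹ * s : ℝ):ℂ))
          = -(2*π*Complex.I*ξ*s) := by
        push_cast
        field_simp [hπc]
        ring
      rw [h1, h2, Real.cosh_eq]
      push_cast
      ring
    rw [hfun, MeasureTheory.Measure.integral_comp_mul_left
      (fun σ : ℝ => Complex.exp (Complex.I * ((-(4*π^2*ξ) : ℝ)) * σ)
        / (2 * Real.cosh (π * σ))) ((2*π)⁻¹)]
    rw [key (-(4*π^2*ξ))]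
    rw [inv_inv, abs_of_pos (by positivity : (0:ℝ) < 2*π), Complex.real_smul]
    rw [show -(4*π^2*ξ)/2 = -(2*π^2*ξ) by ring, Real.cosh_neg]
    rw [show ((2*π : ℝ):ℂ) = 2*(π:ℂ) from by push_cast; ring, mul_one_div,
      mul_div_mul_left _ _ (two_ne_zero)]
end
end

section
/- Let θ ∈ (0,1) and define f(s) = 1/(e^{θ s} + e^{(θ−1)s}) for s ∈ ℝ. Then f is integrable on ℝ and its Fourier transform is f̂(ξ) = π / sin(π(θ + 2πiξ)) for all ξ ∈ ℝ. -/
/-!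
Writing `w = θ + 2πiξ`, the integrand is `e^{-ws} σ(s)` with `σ(s) = 1 / (1 + e^{-s})` the
logistic sigmoid. The substitution `x = σ(s)` maps `ℝ` onto `(0, 1)` and turns the integral into
the Beta integral `B(1 - w, w) = Γ(1 - w) Γ(w)`, which equals `π / sin(πw)` by Euler's reflection
formula.
-/

open Real Complex MeasureTheory

lemma ofReal_exp_cpow (x : ℝ) (w : ℂ) : ((Real.exp x : ℝ) : ℂ) ^ w = cexp (x * w) := by
  rw [cpow_def_of_ne_zero (by exact_mod_cast (Real.exp_pos x).ne'),
    ← ofReal_log (Real.exp_pos x).le, Real.log_exp]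

lemma abs_sigmoid_deriv_smul_betaIntegrand (u v : ℂ) (s : ℝ) :
    |sigmoid s * (1 - sigmoid s)| • ((sigmoid s : ℂ) ^ (u - 1) * (1 - (sigmoid s : ℂ)) ^ (v - 1))
      = (sigmoid s : ℂ) ^ (u + v) * cexp (-v * s) := by
  obtain ⟨L, hL⟩ : ∃ L, Real.exp L = sigmoid s := ⟨_, Real.exp_log (sigmoid_pos s)⟩
  have h_one_sub : 1 - sigmoid s = Real.exp (L - s) := by
    rw [← sigmoid_neg, ← sigmoid_mul_rexp_neg, ← hL, ← Real.exp_add, sub_eq_add_neg]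
  rw [← ofReal_one, ← ofReal_sub, h_one_sub, ← hL, abs_of_pos (by positivity), real_smul,
    ofReal_exp_cpow, ofReal_exp_cpow, ofReal_exp_cpow]
  push_cast
  simp only [← Complex.exp_add]
  congr 1
  ring

lemma image_univ_sigmoid : sigmoid '' Set.univ = Set.Ioo 0 1 := by
  rw [Set.image_univ, range_sigmoid]

lemma hasDerivWithinAt_sigmoid_univ (s : ℝ) :
    HasDerivWithinAt sigmoid (sigmoid s * (1 - sigmoid s)) Set.univ s :=
  (hasDerivAt_sigmoid s).hasDerivWithinAt

lemma integrable_sigmoid_cpow_mul_cexp {u v : ℂ} (hu : 0 < u.re) (hv : 0 < v.re) :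
    Integrable (fun s : ℝ => (sigmoid s : ℂ) ^ (u + v) * cexp (-v * s)) := by
  have hbeta := (betaIntegral_convergent hu hv).1
  rw [← integrableOn_Icc_iff_integrableOn_Ioc, integrableOn_Icc_iff_integrableOn_Ioo,
    ← image_univ_sigmoid, integrableOn_image_iff_integrableOn_abs_deriv_smul MeasurableSet.univ
      (fun s _ => hasDerivWithinAt_sigmoid_univ s) sigmoid_injective.injOn] at hbeta
  simpa only [abs_sigmoid_deriv_smul_betaIntegrand, integrableOn_univ] using hbeta

lemma betaIntegral_eq_integral_sigmoid (u v : ℂ) :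
    betaIntegral u v = ∫ s : ℝ, (sigmoid s : ℂ) ^ (u + v) * cexp (-v * s) := by
  rw [betaIntegral, intervalIntegral.integral_of_le zero_le_one, integral_Ioc_eq_integral_Ioo,
    ← image_univ_sigmoid, integral_image_eq_integral_abs_deriv_smul MeasurableSet.univ
      (fun s _ => hasDerivWithinAt_sigmoid_univ s) sigmoid_injective.injOn, setIntegral_univ]
  simp only [abs_sigmoid_deriv_smul_betaIntegrand]

lemma integrable_cexp_mul_sigmoid {w : ℂ} (h0 : 0 < w.re) (h1 : w.re < 1) :
    Integrable (fun s : ℝ => cexp (-w * s) * sigmoid s) := by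
  have h := integrable_sigmoid_cpow_mul_cexp (u := 1 - w) (by simpa using h1) h0
  simpa only [sub_add_cancel, cpow_one, mul_comm] using h

lemma integral_cexp_mul_sigmoid {w : ℂ} (h0 : 0 < w.re) (h1 : w.re < 1) :
    ∫ s : ℝ, cexp (-w * s) * sigmoid s = π / Complex.sin (π * w) := by
  have hΓ := Gamma_mul_Gamma_eq_betaIntegral (s := 1 - w) (by simpa using h1) h0
  rw [sub_add_cancel, Complex.Gamma_one, one_mul, mul_comm, Complex.Gamma_mul_Gamma_one_sub,
    betaIntegral_eq_integral_sigmoid, sub_add_cancel] at hΓ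
  simpa [mul_comm] using hΓ.symm

lemma one_div_exp_add_exp (θ s : ℝ) :
    1 / (Real.exp (θ * s) + Real.exp ((θ - 1) * s)) = Real.exp (-θ * s) * sigmoid s := by
  have h : Real.exp (θ * s) + Real.exp ((θ - 1) * s)
      = Real.exp (θ * s) * (1 + Real.exp (-s)) := by
    rw [mul_add, mul_one, ← Real.exp_add]
    ring_nf
  rw [h, one_div, mul_inv, ← Real.exp_neg, neg_mul, sigmoid_def]

theorem stmt_2 (θ : ℝ) (hθ : θ ∈ Set.Ioo (0 : ℝ) 1)
    (f : ℝ → ℂ)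
    (hf : ∀ s : ℝ, f s = 1 / (Real.exp (θ * s) + Real.exp ((θ - 1) * s))) :
    MeasureTheory.Integrable f ∧
    ∀ ξ : ℝ, (∫ s : ℝ, f s * Complex.exp (-(2 * π * Complex.I * ξ * s)))
      = π / Complex.sin (π * (θ + 2 * π * Complex.I * ξ)) := by
  have hf' : f = fun s : ℝ => cexp (-θ * s) * sigmoid s := by
    ext s
    rw [hf, ← ofReal_one, ← ofReal_add, ← ofReal_div, one_div_exp_add_exp]
    push_cast
    rfl
  refine ⟨hf' ▸ integrable_cexp_mul_sigmoid (by simpa using hθ.1) (by simpa using hθ.2),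
    fun ξ => ?_⟩
  rw [← integral_cexp_mul_sigmoid (by simpa using hθ.1) (by simpa using hθ.2), hf']
  congr 1 with s
  rw [mul_right_comm, ← Complex.exp_add]
  ring_nf
end

section
/- Let f : ℝ₊ → ℝ₊ be nonincreasing and convex with f(t) → 0 as t → ∞, and set g(s) = f(|s|) for s ∈ ℝ. Then g is a positive definite function on ℝ, i.e., for every finite sequence s₁,…,s_n ∈ ℝ and c₁,…,c_n ∈ ℂ, one has Σ_{i,j} c_i \overline{c_j} g(s_i − s_j) ≥ 0. -/
/-!
A tent `x ↦ max 0 (a - |x|)` is positive definite: on points `sᵢ` its matrix is the Gram matrix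
of the indicators of `[sᵢ, sᵢ + a]` in `L²(ℝ)`. On any finite set of nodes, `f` agrees with a
nonnegative combination of tents. Adding the nodes from right to left, the new node `t` is matched
by a tent at the previous leftmost node `b`; its weight is nonnegative because, by convexity, `f`
lies above the affine continuation of the interpolant left of `b`. The first tent continues a
falling chord of `f` from the rightmost node, which exists because `f → 0`.
-/

open Filter MeasureTheory Set
open scoped ComplexOrder

def IsPositiveDefinite (φ : ℝ → ℝ) : Prop :=
  ∀ (n : ℕ) (s : Fin n → ℝ), (Matrix.of fun i j => (φ (s i - s j) : ℂ)).PosSemidef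

namespace IsPositiveDefinite

variable {φ ψ : ℝ → ℝ}

theorem add (hφ : IsPositiveDefinite φ) (hψ : IsPositiveDefinite ψ) :
    IsPositiveDefinite fun x => φ x + ψ x := fun n s => by
  convert (hφ n s).add (hψ n s) using 1
  ext i j
  simp

theorem const_mul (hφ : IsPositiveDefinite φ) {μ : ℝ} (hμ : 0 ≤ μ) :
    IsPositiveDefinite fun x => μ * φ x := fun n s => by
  convert (hφ n s).smul hμ using 1
  ext i j
  simp

theorem sum_nonneg (hφ : IsPositiveDefinite φ) {n : ℕ} (s : Fin n → ℝ) (c : Fin n → ℂ) :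
    0 ≤ ∑ i, ∑ j, c i * starRingEnd ℂ (c j) * (φ (s i - s j) : ℂ) := by
  convert (hφ n s).dotProduct_mulVec_nonneg (star c) using 1
  simp [dotProduct, Matrix.mulVec, Finset.mul_sum, mul_comm, mul_left_comm]

end IsPositiveDefinite

theorem volume_real_Icc_add_inter_Icc_add (a x y : ℝ) :
    volume.real (Icc x (x + a) ∩ Icc y (y + a)) = max 0 (a - |x - y|) := by
  rw [Icc_inter_Icc, Real.volume_real_Icc, max_comm]
  congr 1
  rcases le_total x y with h | h
  · rw [max_eq_right h, min_eq_left (by linarith), abs_of_nonpos (by linarith)]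
    ring
  · rw [max_eq_left h, min_eq_right (by linarith), abs_of_nonneg (by linarith)]
    ring

theorem isPositiveDefinite_tent (a : ℝ) : IsPositiveDefinite fun x => max 0 (a - |x|) :=
  fun n s => by
  let u : Fin n → Lp ℂ 2 (volume : Measure ℝ) := fun i =>
    indicatorConstLp 2 measurableSet_Icc (measure_Icc_lt_top (a := s i) (b := s i + a)).ne 1
  have hgram : Matrix.gram ℂ u = Matrix.of fun i j => ((max 0 (a - |s i - s j|) : ℝ) : ℂ) := by
    ext i j
    rw [Matrix.gram_apply, L2.inner_indicatorConstLp_one_indicatorConstLp_one _ _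
      measure_Icc_lt_top.ne measure_Icc_lt_top.ne, volume_real_Icc_add_inter_Icc_add]
    rfl
  exact hgram ▸ Matrix.posSemidef_gram ℂ u

/-- The invariant of the induction that adds the interpolation nodes in decreasing order. -/
structure PosDefInterpolant (f : ℝ → ℝ) (D : Finset ℝ) (m : ℝ) (L : ℝ → ℝ) : Prop where
  isPositiveDefinite : IsPositiveDefinite fun x => L |x|
  eqOn : EqOn L f D
  isLeast : IsLeast (D : Set ℝ) m
  affine : ∃ α β : ℝ, ∀ x ≤ m, L x = α + β * x
  le_of_mem_Icc : ∀ x ∈ Icc 0 m, L x ≤ f x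

section Interpolation

variable {f : ℝ → ℝ}

theorem exists_posDefInterpolant_singleton (hconv : ConvexOn ℝ (Ici 0) f)
    (hpos : ∀ t ∈ Ici (0 : ℝ), 0 ≤ f t) (hlim : Tendsto f atTop (nhds 0)) {T : ℝ} (hT : 0 ≤ T) :
    ∃ L, PosDefInterpolant f {T} T L := by
  obtain ⟨μ, A, hμ, hTA, hAT, hle⟩ : ∃ μ A : ℝ, 0 ≤ μ ∧ T ≤ A ∧ μ * (A - T) = f T ∧
      ∀ x ∈ Icc 0 T, μ * (A - x) ≤ f x := by
    rcases (hpos T hT).eq_or_lt with hfT | hfT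
    · exact ⟨0, T, le_rfl, le_rfl, by rw [← hfT, zero_mul],
        fun x hx => by simpa using hpos x hx.1⟩
    obtain ⟨z, hfz, hTz⟩ :=
      ((hlim.eventually (gt_mem_nhds hfT)).and (eventually_gt_atTop T)).exists
    have hchord : (f z - f T) / (z - T) < 0 := div_neg_of_neg_of_pos (by linarith) (by linarith)
    set μ := -((f z - f T) / (z - T))
    have hμ : 0 < μ := neg_pos.2 hchord
    have hAT : μ * (T + f T / μ - T) = f T := by
      rw [add_sub_cancel_left, mul_div_cancel₀ _ hμ.ne']
    refine ⟨μ, T + f T / μ, hμ.le, by have := div_pos hfT hμ; linarith, hAT, fun x hx => ?_⟩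
    rcases hx.2.lt_or_eq with hxT | rfl
    · have hslope := hconv.slope_mono_adjacent hx.1 (hT.trans hTz.le) hxT hTz
      rw [div_le_iff₀ (sub_pos.2 hxT)] at hslope
      field_simp
      linarith
    · exact hAT.le
  refine ⟨fun x => μ * max 0 (A - x), (isPositiveDefinite_tent A).const_mul hμ, ?_,
    by rw [Finset.coe_singleton]; exact isLeast_singleton, ⟨μ * A, -μ, fun x hx => ?_⟩,
    fun x hx => ?_⟩
  · intro x hx
    rw [Finset.coe_singleton, mem_singleton_iff] at hx
    subst hx
    beta_reduce
    rw [max_eq_right (sub_nonneg.2 hTA), hAT]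
  · rw [max_eq_right (by linarith)]
    ring
  · rw [max_eq_right (by linarith [hx.2])]
    exact hle x hx

theorem PosDefInterpolant.exists_insert (hconv : ConvexOn ℝ (Ici 0) f) {D : Finset ℝ} {b : ℝ}
    {L : ℝ → ℝ} (h : PosDefInterpolant f D b L) {t : ℝ} (ht : 0 ≤ t) (htb : t < b) :
    ∃ L', PosDefInterpolant f (insert t D) t L' := by
  obtain ⟨α, β, hL⟩ := h.affine
  have hbt : b - t ≠ 0 := (sub_pos.2 htb).ne'
  set μ := (f t - L t) / (b - t)
  have hμ : 0 ≤ μ := div_nonneg (sub_nonneg.2 (h.le_of_mem_Icc t ⟨ht, htb.le⟩)) (by linarith)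
  set L' := fun x => L x + μ * max 0 (b - x)
  have hL'_affine : ∀ x ≤ b, L' x = (α + μ * b) + (β - μ) * x := fun x hx => by
    simp only [L', hL x hx, max_eq_right (sub_nonneg.2 hx)]
    ring
  have hL't : L' t = f t := by
    simp only [L', μ, max_eq_right (sub_nonneg.2 htb.le)]
    field_simp
    ring
  have hL'b : L' b = f b := by simpa [L'] using h.eqOn h.isLeast.1
  refine ⟨L', h.isPositiveDefinite.add ((isPositiveDefinite_tent b).const_mul hμ), ?_, ?_,
    ⟨_, _, fun x hx => hL'_affine x (hx.trans htb.le)⟩, fun x hx => ?_⟩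
  · intro x hx
    rw [Finset.coe_insert, mem_insert_iff] at hx
    rcases hx with rfl | hx
    · exact hL't
    · simpa [L', max_eq_left (sub_nonpos.2 (h.isLeast.2 hx))] using h.eqOn hx
  · rw [Finset.coe_insert]
    exact ⟨mem_insert t _,
      forall_mem_insert.2 ⟨le_rfl, fun x hx => htb.le.trans (h.isLeast.2 hx)⟩⟩
  rcases hx.2.lt_or_eq with hxt | rfl
  · have hslope := hconv.slope_mono_adjacent hx.1 (ht.trans htb.le) hxt htb
    rw [← hL't, ← hL'b, hL'_affine t htb.le, hL'_affine b le_rfl] at hslope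
    rw [show (α + μ * b + (β - μ) * b - (α + μ * b + (β - μ) * t)) / (b - t) = β - μ by
      field_simp; ring, div_le_iff₀ (sub_pos.2 hxt)] at hslope
    rw [hL'_affine x (hx.2.trans htb.le)]
    linarith
  · exact hL't.le

theorem exists_posDefInterpolant (hconv : ConvexOn ℝ (Ici 0) f)
    (hpos : ∀ t ∈ Ici (0 : ℝ), 0 ≤ f t) (hlim : Tendsto f atTop (nhds 0)) {D : Finset ℝ}
    (hD : ∀ t ∈ D, 0 ≤ t) (hne : D.Nonempty) :
    ∃ L m, PosDefInterpolant f D m L := by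
  induction D using Finset.induction_on_min with
  | empty => exact absurd hne Finset.not_nonempty_empty
  | insert t D hlt ih =>
    have ht := hD t (Finset.mem_insert_self t D)
    rcases D.eq_empty_or_nonempty with rfl | hD'
    · exact ⟨_, t, (exists_posDefInterpolant_singleton hconv hpos hlim ht).choose_spec⟩
    obtain ⟨L, b, hL⟩ := ih (fun x hx => hD x (Finset.mem_insert_of_mem hx)) hD'
    exact ⟨_, t, (hL.exists_insert hconv ht (hlt b hL.isLeast.1)).choose_spec⟩

theorem exists_isPositiveDefinite_eqOn (hconv : ConvexOn ℝ (Ici 0) f)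
    (hpos : ∀ t ∈ Ici (0 : ℝ), 0 ≤ f t) (hlim : Tendsto f atTop (nhds 0)) {D : Finset ℝ}
    (hD : ∀ t ∈ D, 0 ≤ t) :
    ∃ L : ℝ → ℝ, IsPositiveDefinite (fun x => L |x|) ∧ EqOn L f D := by
  obtain ⟨L, m, hL⟩ := exists_posDefInterpolant hconv hpos hlim
    (D := insert 0 D) (by simpa using hD) (Finset.insert_nonempty 0 D)
  exact ⟨L, hL.isPositiveDefinite, hL.eqOn.mono (by simp)⟩

end Interpolation

theorem stmt_4_general (f : ℝ → ℝ)
    (hpos : ∀ t ∈ Set.Ici (0 : ℝ), 0 ≤ f t)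
    (hconv : ConvexOn ℝ (Set.Ici 0) f)
    (hlim : Tendsto f atTop (nhds 0))
    (g : ℝ → ℝ) (hg : ∀ s : ℝ, g s = f |s|) :
    ∀ (n : ℕ) (s : Fin n → ℝ) (c : Fin n → ℂ),
      0 ≤ ∑ i : Fin n, ∑ j : Fin n,
        c i * (starRingEnd ℂ) (c j) * (g (s i - s j) : ℂ) := by
  intro n s c
  obtain ⟨L, hL, hLf⟩ := exists_isPositiveDefinite_eqOn hconv hpos hlim
    (D := Finset.univ.image fun p : Fin n × Fin n => |s p.1 - s p.2|)
    (by simp only [Finset.mem_image]; rintro _ ⟨p, -, rfl⟩; exact abs_nonneg _)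
  have hgL : ∀ i j, g (s i - s j) = L |s i - s j| := fun i j => by
    rw [hg, hLf (by simp)]
  simpa only [hgL] using hL.sum_nonneg s c

theorem stmt_4 (f : ℝ → ℝ)
    (hpos : ∀ t ∈ Set.Ici (0 : ℝ), 0 ≤ f t)
    (hanti : AntitoneOn f (Set.Ici 0))
    (hconv : ConvexOn ℝ (Set.Ici 0) f)
    (hlim : Tendsto f atTop (nhds 0))
    (g : ℝ → ℝ) (hg : ∀ s : ℝ, g s = f |s|) :
    ∀ (n : ℕ) (s : Fin n → ℝ) (c : Fin n → ℂ),
      0 ≤ ∑ i : Fin n, ∑ j : Fin n,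
        c i * (starRingEnd ℂ) (c j) * (g (s i - s j) : ℂ) :=
  stmt_4_general f hpos hconv hlim g hg
end

section
/- For any finite sequence of positive reals λ₁,…,λ_n, the n×n matrix with entries min(λ_i, λ_j)/max(λ_i, λ_j) is positive semidefinite. -/
/-!
For positive `a, b` we have `min a b / max a b = min a b * min a⁻¹ b⁻¹`, so the matrix is the
Hadamard product of the matrices `min (λ i) (λ j)` and `min (λ i)⁻¹ (λ j)⁻¹`. Each of these is
positive semidefinite, being the Gram matrix of the indicators of the intervals `(0, λ i]`
(resp. `(0, (λ i)⁻¹]`) in `L²(ℝ)`, and the Schur product theorem concludes.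
-/

open MeasureTheory Matrix

theorem posSemidef_measureReal_inter {α ι : Type*} [MeasurableSpace α] [Finite ι]
    (μ : Measure α) {S : ι → Set α} (hS : ∀ i, MeasurableSet (S i)) (hμS : ∀ i, μ (S i) ≠ ⊤) :
    (Matrix.of fun i j => μ.real (S i ∩ S j)).PosSemidef := by
  have hgram : (Matrix.of fun i j => μ.real (S i ∩ S j))
      = gram ℝ fun i => indicatorConstLp 2 (hS i) (hμS i) (1 : ℝ) := by
    ext i j
    simp [L2.inner_indicatorConstLp_one_indicatorConstLp_one]
  exact hgram ▸ posSemidef_gram ℝ _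

theorem posSemidef_min {ι : Type*} [Finite ι] {a : ι → ℝ} (ha : ∀ i, 0 ≤ a i) :
    (Matrix.of fun i j => min (a i) (a j)).PosSemidef := by
  have hvol : (Matrix.of fun i j => min (a i) (a j))
      = Matrix.of fun i j => volume.real (Set.Ioc 0 (a i) ∩ Set.Ioc 0 (a j)) := by
    ext i j
    simp [Set.Ioc_inter_Ioc, le_min (ha i) (ha j)]
  exact hvol ▸ posSemidef_measureReal_inter volume (fun _ => measurableSet_Ioc)
    (fun _ => measure_Ioc_lt_top.ne)

theorem min_div_max_eq_min_mul_min_inv {a b : ℝ} (ha : 0 < a) (hb : 0 < b) :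
    min a b / max a b = min a b * min a⁻¹ b⁻¹ := by
  rcases le_total a b with h | h
  · rw [min_eq_left h, max_eq_right h, min_eq_right (by gcongr), div_eq_mul_inv]
  · rw [min_eq_right h, max_eq_left h, min_eq_left (by gcongr), div_eq_mul_inv]

theorem stmt_5 (n : ℕ) (lam : Fin n → ℝ) (hlam : ∀ i, 0 < lam i) :
    Matrix.PosSemidef
      (Matrix.of fun i j : Fin n => min (lam i) (lam j) / max (lam i) (lam j)) := by
  have hmin := posSemidef_min fun i => (hlam i).le
  have hmin_inv := posSemidef_min fun i => (inv_pos.mpr (hlam i)).le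
  have hentry : (Matrix.of fun i j : Fin n => min (lam i) (lam j) / max (lam i) (lam j))
      = (Matrix.of fun i j => min (lam i) (lam j)) ⊙
          Matrix.of fun i j => min (lam i)⁻¹ (lam j)⁻¹ := by
    ext i j
    exact min_div_max_eq_min_mul_min_inv (hlam i) (hlam j)
  exact hentry ▸ hmin.hadamard hmin_inv
end

section
/- Let θ ∈ [0,1]. For any finite sequence of positive reals λ₁,…,λ_n, the n×n matrix with entries (λ_i + λ_j)^θ / max(λ_i, λ_j)^θ factors as ⟨ξ_i, η_j⟩ with sup_i ‖ξ_i‖ · sup_j ‖η_j‖ ≤ 2^θ in some Hilbert space; in particular its Schur (Hadamard) multiplier norm on n×n matrices is at most 2^θ. -/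
/-!
Write `λ_i = e^{t_i}`. Then `(λ_i + λ_j)^θ / max(λ_i, λ_j)^θ = f(|t_i - t_j|)` with
`f(s) = (1 + e^{-s})^θ`. For `θ ≥ 0` the function `f` is convex on `[0, ∞)` and decreases to `1`,
so by Taylor's formula at infinity it is `1` plus a nonnegative mixture of tents `(a - s)⁺`
(Pólya's argument). A tent matrix `((a - |t_i - t_j|)⁺)` is the Gram matrix of the indicators of
the intervals `(t_i, t_i + a]` in `L²(ℝ)`, so the matrix `f(|t_i - t_j|)` is positive semidefinite,
hence a Gram matrix `⟨ξ_i, ξ_j⟩` with `‖ξ_i‖² = f(0) = 2^θ`. Any factorization `φ_ij = ⟨ξ_i, η_j⟩`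
bounds the Schur multiplier norm of `φ` by `sup ‖ξ_i‖ · sup ‖η_j‖`: splitting along the
coordinates of the `ξ_i`, `η_j` writes `φ ∘ x` as `∑_k D_k^* x E_k` with diagonal `D_k`, `E_k`,
and Cauchy–Schwarz finishes.
-/

noncomputable def matOpNorm {n : ℕ} (A : Matrix (Fin n) (Fin n) ℂ) : ℝ :=
  ‖Matrix.toEuclideanCLM (𝕜 := ℂ) (n := Fin n) A‖

open Real MeasureTheory Set Filter Topology Matrix
open scoped InnerProductSpace

noncomputable def expKernel (θ t : ℝ) : ℝ := (1 + exp (-t)) ^ θ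

noncomputable def expKernelDeriv (θ t : ℝ) : ℝ := -(θ * exp (-t) * (1 + exp (-t)) ^ (θ - 1))

noncomputable def expKernelDeriv2 (θ t : ℝ) : ℝ :=
  θ * exp (-t) * (1 + exp (-t)) ^ (θ - 2) * (1 + θ * exp (-t))

lemma hasDerivAt_one_add_exp_neg (t : ℝ) :
    HasDerivAt (fun s => 1 + exp (-s)) (-exp (-t)) t := by
  simpa using ((hasDerivAt_neg t).exp).const_add 1

lemma hasDerivAt_expKernel (θ t : ℝ) : HasDerivAt (expKernel θ) (expKernelDeriv θ t) t :=
  ((hasDerivAt_one_add_exp_neg t).rpow_const (p := θ) (Or.inl (by positivity))).congr_deriv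
    (by simp only [expKernelDeriv]; ring)

lemma hasDerivAt_expKernelDeriv (θ t : ℝ) :
    HasDerivAt (expKernelDeriv θ) (expKernelDeriv2 θ t) t := by
  have hu : (0 : ℝ) < 1 + exp (-t) := by positivity
  refine ((((hasDerivAt_neg t).exp.const_mul θ).mul
    ((hasDerivAt_one_add_exp_neg t).rpow_const (p := θ - 1) (Or.inl hu.ne'))).neg).congr_deriv ?_
  rw [expKernelDeriv2, show θ - 1 - 1 = θ - 2 by ring, show θ - 1 = θ - 2 + 1 by ring,
    rpow_add_one hu.ne']
  ring

lemma expKernelDeriv2_nonneg {θ : ℝ} (hθ : 0 ≤ θ) (t : ℝ) : 0 ≤ expKernelDeriv2 θ t := by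
  unfold expKernelDeriv2; positivity

lemma tendsto_expKernel_atTop (θ : ℝ) : Tendsto (expKernel θ) atTop (𝓝 1) := by
  have h : Tendsto (fun a => (1 + exp (-a)) ^ θ) atTop (𝓝 1) := by
    simpa using (tendsto_exp_neg_atTop_nhds_zero.const_add 1).rpow_const (p := θ) (Or.inl (by simp))
  exact h

lemma tendsto_sub_mul_expKernelDeriv_atTop (θ c : ℝ) :
    Tendsto (fun a => (a - c) * expKernelDeriv θ a) atTop (𝓝 0) := by
  have hlin : Tendsto (fun a => (a - c) * exp (-a)) atTop (𝓝 0) := by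
    have h := (tendsto_pow_mul_exp_neg_atTop_nhds_zero 1).sub
      (tendsto_exp_neg_atTop_nhds_zero.const_mul c)
    simp only [pow_one, mul_zero, sub_zero] at h
    exact h.congr fun a => by ring
  have hpow := (tendsto_exp_neg_atTop_nhds_zero.const_add 1).rpow_const (p := θ - 1)
    (Or.inl (by simp))
  have h := (hlin.mul hpow).const_mul (-θ)
  simp only [mul_zero, zero_mul] at h
  exact h.congr fun a => by rw [expKernelDeriv]; ring

lemma expKernel_zero (θ : ℝ) : expKernel θ 0 = 2 ^ θ := by
  norm_num [expKernel]

lemma exp_neg_abs_log_sub_log {a b : ℝ} (ha : 0 < a) (hb : 0 < b) :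
    exp (-|log a - log b|) = min a b / max a b := by
  rcases le_total a b with h | h
  · rw [abs_of_nonpos (sub_nonpos.2 (log_le_log ha h)), neg_neg, exp_sub, exp_log ha,
      exp_log hb, min_eq_left h, max_eq_right h]
  · rw [abs_of_nonneg (sub_nonneg.2 (log_le_log hb h)), neg_sub, exp_sub, exp_log ha,
      exp_log hb, min_eq_right h, max_eq_left h]

lemma add_rpow_div_max_rpow {a b : ℝ} (ha : 0 < a) (hb : 0 < b) (θ : ℝ) :
    (a + b) ^ θ / max a b ^ θ = expKernel θ |log a - log b| := by
  have hmax : 0 < max a b := lt_max_of_lt_left ha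
  rw [← div_rpow (by positivity) hmax.le, expKernel, exp_neg_abs_log_sub_log ha hb,
    ← min_add_max a b]
  congr 1
  field_simp
  ring

theorem integrable_and_integral_mul_posPart_sub {f f' f'' : ℝ → ℝ} {L : ℝ} (c : ℝ)
    (hf : ∀ a, HasDerivAt f (f' a) a) (hf' : ∀ a, HasDerivAt f' (f'' a) a)
    (hf'' : ∀ a, 0 ≤ f'' a) (hfL : Tendsto f atTop (𝓝 L))
    (hf'c : Tendsto (fun a => (a - c) * f' a) atTop (𝓝 0)) :
    Integrable (fun a => f'' a * (a - c)⁺) ∧ ∫ a, f'' a * (a - c)⁺ = f c - L := by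
  have hderiv : ∀ a ∈ Ici c, HasDerivAt (fun a => (a - c) * f' a - f a) (f'' a * (a - c)⁺) a := by
    intro a ha
    refine ((((hasDerivAt_id a).sub_const c).mul (hf' a)).sub (hf a)).congr_deriv ?_
    rw [posPart_eq_self.2 (sub_nonneg.2 (mem_Ici.1 ha)), id]
    ring
  have hnonneg : ∀ a ∈ Ioi c, 0 ≤ f'' a * (a - c)⁺ := fun a _ =>
    mul_nonneg (hf'' a) (posPart_nonneg _)
  have hlim : Tendsto (fun a => (a - c) * f' a - f a) atTop (𝓝 (0 - L)) := hf'c.sub hfL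
  have hzero : ∀ a ∉ Ioi c, f'' a * (a - c)⁺ = 0 := fun a ha => by
    rw [posPart_eq_zero.2 (sub_nonpos.2 (not_lt.1 ha)), mul_zero]
  refine ⟨(integrableOn_iff_integrable_of_support_subset fun a ha => ?_).1
    (integrableOn_Ioi_deriv_of_nonneg' hderiv hnonneg hlim), ?_⟩
  · by_contra h; exact ha (hzero a h)
  · rw [← setIntegral_eq_integral_of_forall_compl_eq_zero hzero,
      integral_Ioi_of_hasDerivAt_of_nonneg' hderiv hnonneg hlim]
    ring

section PositiveSemidefinite

variable {ι : Type*} [Fintype ι]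

lemma volume_real_Ioc_inter_Ioc (u v a : ℝ) :
    volume.real (Ioc u (u + a) ∩ Ioc v (v + a)) = (a - |u - v|)⁺ := by
  rw [Ioc_inter_Ioc, Real.volume_real_Ioc, posPart_def]
  congr 1
  rcases le_total u v with h | h
  · rw [max_eq_right h, min_eq_left (by linarith), abs_of_nonpos (by linarith)]; ring
  · rw [max_eq_left h, min_eq_right (by linarith), abs_of_nonneg (by linarith)]; ring

lemma posSemidef_tent (a : ℝ) (t : ι → ℝ) :
    (of fun i j => (a - |t i - t j|)⁺).PosSemidef := by
  simpa only [volume_real_Ioc_inter_Ioc] using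
    posSemidef_matrix_measure_inter (μ := volume) (s := fun i => Ioc (t i) (t i + a))
      (fun _ => measurableSet_Ioc) (fun _ => measure_Ioc_lt_top.ne)

lemma posSemidef_of_integral {α : Type*} [MeasurableSpace α] {μ : Measure α}
    {K : α → Matrix ι ι ℝ} (hK : ∀ a, (K a).PosSemidef)
    (hint : ∀ i j, Integrable (fun a => K a i j) μ) :
    (of fun i j => ∫ a, K a i j ∂μ).PosSemidef := by
  refine .of_dotProduct_mulVec_nonneg ?_ fun x => ?_
  · ext i j
    simpa using integral_congr_ae (Eventually.of_forall fun a => (hK a).isHermitian.apply i j)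
  · have hquad : star x ⬝ᵥ (of (fun i j => ∫ a, K a i j ∂μ) *ᵥ x)
        = ∫ a, star x ⬝ᵥ (K a *ᵥ x) ∂μ := by
      simp only [dotProduct, mulVec, of_apply]
      rw [integral_finsetSum _ fun i _ => (integrable_finsetSum _ fun j _ =>
        (hint i j).mul_const _).const_mul _]
      refine Finset.sum_congr rfl fun i _ => ?_
      rw [integral_const_mul, integral_finsetSum _ fun j _ => (hint i j).mul_const _]
      simp only [integral_mul_const]
    rw [hquad]
    exact integral_nonneg fun a => (hK a).dotProduct_mulVec_nonneg x

theorem posSemidef_of_eq_add_integral_tent {φ w : ℝ → ℝ} {b : ℝ} (hb : 0 ≤ b)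
    (hw : ∀ a, 0 ≤ w a) (hint : ∀ c, 0 ≤ c → Integrable fun a => w a * (a - c)⁺)
    (hφ : ∀ c, 0 ≤ c → φ c = b + ∫ a, w a * (a - c)⁺) (t : ι → ℝ) :
    (of fun i j => φ |t i - t j|).PosSemidef := by
  have hconst : (of fun _ _ : ι => b).PosSemidef := by
    convert (posSemidef_vecMulVec_self_star (fun _ : ι => (1 : ℝ))).smul hb using 1
    ext; simp [vecMulVec]
  have htents := posSemidef_of_integral (μ := volume)
    (K := fun a => w a • of fun i j => (a - |t i - t j|)⁺)
    (fun a => (posSemidef_tent a t).smul (hw a)) (fun i j => hint _ (abs_nonneg _))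
  convert hconst.add htents using 1
  ext i j
  simp [hφ _ (abs_nonneg _)]

open scoped MatrixOrder in
lemma exists_inner_eq_of_posSemidef (𝕜 : Type*) [RCLike 𝕜] {A : Matrix ι ι ℝ}
    (hA : A.PosSemidef) : ∃ v : ι → EuclideanSpace 𝕜 ι, ∀ i j, ⟪v i, v j⟫_𝕜 = A i j := by
  classical
  obtain ⟨B, rfl⟩ := CStarAlgebra.nonneg_iff_eq_star_mul_self.mp hA.nonneg
  refine ⟨fun i => WithLp.toLp 2 fun k => (B k i : 𝕜), fun i j => ?_⟩
  simp [PiLp.inner_apply, mul_apply, mul_comm]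

theorem posSemidef_expKernel {θ : ℝ} (hθ : 0 ≤ θ) (t : ι → ℝ) :
    (of fun i j => expKernel θ |t i - t j|).PosSemidef := by
  have hrep c := integrable_and_integral_mul_posPart_sub c (hasDerivAt_expKernel θ)
    (hasDerivAt_expKernelDeriv θ) (expKernelDeriv2_nonneg hθ) (tendsto_expKernel_atTop θ)
    (tendsto_sub_mul_expKernelDeriv_atTop θ c)
  exact posSemidef_of_eq_add_integral_tent zero_le_one (expKernelDeriv2_nonneg hθ)
    (fun c _ => (hrep c).1) (fun c _ => by rw [(hrep c).2]; ring) t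

end PositiveSemidefinite

section SchurMultiplier

variable {𝕜 : Type*} [RCLike 𝕜] {ι κ : Type*} [Fintype ι] [Fintype κ]

lemma sum_norm_sq_toLp_mul_le (v : ι → EuclideanSpace 𝕜 κ) (u : EuclideanSpace 𝕜 ι) :
    ∑ k, ‖WithLp.toLp 2 (fun i => u i * v i k)‖ ^ 2 ≤ ((⨆ i, ‖v i‖) * ‖u‖) ^ 2 := by
  have hv : ∀ i, ‖v i‖ ≤ ⨆ i, ‖v i‖ := le_ciSup (Finite.bddAbove_range _)
  calc ∑ k, ‖WithLp.toLp 2 (fun i => u i * v i k)‖ ^ 2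
      = ∑ i, ‖u i‖ ^ 2 * ‖v i‖ ^ 2 := by
        simp only [EuclideanSpace.norm_sq_eq, norm_mul, mul_pow, Finset.mul_sum]
        exact Finset.sum_comm
    _ ≤ ∑ i, ‖u i‖ ^ 2 * (⨆ i, ‖v i‖) ^ 2 := by
        gcongr with i
        exact hv i
    _ = ((⨆ i, ‖v i‖) * ‖u‖) ^ 2 := by
        rw [← Finset.sum_mul, ← EuclideanSpace.norm_sq_eq]; ring

variable [DecidableEq ι]

lemma inner_toEuclideanCLM_hadamard (ξ η : ι → EuclideanSpace 𝕜 κ) (x : Matrix ι ι 𝕜)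
    (u w : EuclideanSpace 𝕜 ι) :
    ⟪u, toEuclideanCLM (𝕜 := 𝕜) ((of fun i j => ⟪ξ i, η j⟫_𝕜) ⊙ x) w⟫_𝕜
      = ∑ k, ⟪WithLp.toLp 2 (fun i => u i * ξ i k),
          toEuclideanCLM (𝕜 := 𝕜) x (WithLp.toLp 2 (fun j => w j * η j k))⟫_𝕜 := by
  simp only [PiLp.inner_apply, ofLp_toEuclideanCLM, mulVec, dotProduct, hadamard_apply, of_apply,
    RCLike.inner_apply, map_mul, Finset.sum_mul]
  refine (Finset.sum_comm.trans (Finset.sum_congr rfl fun i _ => ?_)).symm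
  refine Finset.sum_comm.trans (Finset.sum_congr rfl fun j _ => Finset.sum_congr rfl fun k _ => ?_)
  ring

theorem norm_toEuclideanCLM_hadamard_le (ξ η : ι → EuclideanSpace 𝕜 κ) (x : Matrix ι ι 𝕜) :
    ‖toEuclideanCLM (𝕜 := 𝕜) ((of fun i j => ⟪ξ i, η j⟫_𝕜) ⊙ x)‖
      ≤ (⨆ i, ‖ξ i‖) * (⨆ j, ‖η j‖) * ‖toEuclideanCLM (𝕜 := 𝕜) x‖ := by
  set A := toEuclideanCLM (𝕜 := 𝕜) x
  set B := toEuclideanCLM (𝕜 := 𝕜) ((of fun i j => ⟪ξ i, η j⟫_𝕜) ⊙ x)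
  set a := ⨆ i, ‖ξ i‖
  set b := ⨆ j, ‖η j‖
  have ha : 0 ≤ a := Real.iSup_nonneg fun _ => norm_nonneg _
  have hb : 0 ≤ b := Real.iSup_nonneg fun _ => norm_nonneg _
  have hC : 0 ≤ a * b * ‖A‖ := by positivity
  have hinner : ∀ u w, ‖⟪u, B w⟫_𝕜‖ ≤ a * b * ‖A‖ * ‖u‖ * ‖w‖ := by
    intro u w
    set P := fun k => WithLp.toLp 2 (fun i => u i * ξ i k)
    set Q := fun k => WithLp.toLp 2 (fun j => w j * η j k)
    calc ‖⟪u, B w⟫_𝕜‖ = ‖∑ k, ⟪P k, A (Q k)⟫_𝕜‖ := by rw [inner_toEuclideanCLM_hadamard]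
      _ ≤ ∑ k, ‖P k‖ * (‖A‖ * ‖Q k‖) := by
          refine (norm_sum_le _ _).trans (Finset.sum_le_sum fun k _ => ?_)
          exact (norm_inner_le_norm _ _).trans (by gcongr; exact A.le_opNorm _)
      _ = ‖A‖ * ∑ k, ‖P k‖ * ‖Q k‖ := by
          rw [Finset.mul_sum]; exact Finset.sum_congr rfl fun k _ => by ring
      _ ≤ ‖A‖ * (√(∑ k, ‖P k‖ ^ 2) * √(∑ k, ‖Q k‖ ^ 2)) := by
          gcongr; exact Real.sum_mul_le_sqrt_mul_sqrt _ _ _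
      _ ≤ ‖A‖ * ((a * ‖u‖) * (b * ‖w‖)) := by
          gcongr
          · exact Real.sqrt_le_iff.2 ⟨by positivity, sum_norm_sq_toLp_mul_le ξ u⟩
          · exact Real.sqrt_le_iff.2 ⟨by positivity, sum_norm_sq_toLp_mul_le η w⟩
      _ = a * b * ‖A‖ * ‖u‖ * ‖w‖ := by ring
  refine ContinuousLinearMap.opNorm_le_bound _ hC fun w => ?_
  have hsq : ‖B w‖ * ‖B w‖ ≤ ‖B w‖ * (a * b * ‖A‖ * ‖w‖) := by
    have := hinner (B w) w
    rw [inner_self_eq_norm_sq_to_K, norm_pow, RCLike.norm_ofReal, abs_norm] at this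
    linarith
  rcases (norm_nonneg (B w)).eq_or_lt with h0 | hpos
  · rw [← h0]; positivity
  · exact le_of_mul_le_mul_left hsq hpos

end SchurMultiplier

theorem stmt_6 (θ : ℝ) (hθ : θ ∈ Set.Icc (0 : ℝ) 1)
    (n : ℕ) (lam : Fin n → ℝ) (hlam : ∀ i, 0 < lam i) :
    (∃ (H : Type) (_ : NormedAddCommGroup H) (_ : InnerProductSpace ℂ H)
        (ξ η : Fin n → H),
        (∀ i j, ((lam i + lam j) ^ θ / max (lam i) (lam j) ^ θ : ℝ)
            = (inner ℂ (ξ i) (η j) : ℂ)) ∧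
        (⨆ i, ‖ξ i‖) * (⨆ j, ‖η j‖) ≤ 2 ^ θ) ∧
    ∀ x : Matrix (Fin n) (Fin n) ℂ,
      matOpNorm (Matrix.of fun i j =>
          (((lam i + lam j) ^ θ / max (lam i) (lam j) ^ θ : ℝ) : ℂ) * x i j)
        ≤ 2 ^ θ * matOpNorm x := by
  obtain ⟨ξ, hξ⟩ := exists_inner_eq_of_posSemidef ℂ (posSemidef_expKernel hθ.1 (log ∘ lam))
  have hfac i j : (((lam i + lam j) ^ θ / max (lam i) (lam j) ^ θ : ℝ) : ℂ) = ⟪ξ i, ξ j⟫_ℂ := by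
    rw [hξ, add_rpow_div_max_rpow (hlam i) (hlam j)]; rfl
  have hnorm i : ‖ξ i‖ = √(2 ^ θ) := by
    have h := hξ i i
    simp only [inner_self_eq_norm_sq_to_K, of_apply, sub_self, abs_zero, expKernel_zero] at h
    rw [← sqrt_sq (norm_nonneg (ξ i)), (by exact_mod_cast h : ‖ξ i‖ ^ 2 = 2 ^ θ)]
  have hsup : (⨆ i, ‖ξ i‖) * (⨆ i, ‖ξ i‖) ≤ 2 ^ θ := by
    have hle : (⨆ i, ‖ξ i‖) ≤ √(2 ^ θ) := Real.iSup_le (fun i => (hnorm i).le) (sqrt_nonneg _)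
    calc (⨆ i, ‖ξ i‖) * (⨆ i, ‖ξ i‖) ≤ √(2 ^ θ) * √(2 ^ θ) :=
          mul_self_le_mul_self (Real.iSup_nonneg fun _ => norm_nonneg _) hle
      _ = 2 ^ θ := mul_self_sqrt (by positivity)
  refine ⟨⟨_, _, _, ξ, ξ, hfac, hsup⟩, fun x => ?_⟩
  have hmat : (of fun i j => (((lam i + lam j) ^ θ / max (lam i) (lam j) ^ θ : ℝ) : ℂ) * x i j)
      = (of fun i j => ⟪ξ i, ξ j⟫_ℂ) ⊙ x := by
    ext i j; simp [hfac]
  rw [matOpNorm, matOpNorm, hmat]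
  exact (norm_toEuclideanCLM_hadamard_le ξ ξ x).trans (by gcongr)
end

section
/- There exists no constant K such that for all n and all positive reals λ₁,…,λ_n, μ₁,…,μ_n, the n×n matrix with entries ((λ_i+λ_j)(μ_i+μ_j)) / ((λ_i^{1−θ}μ_i^θ + λ_j^{1−θ}μ_j^θ)(λ_i^θ μ_i^{1−θ} + λ_j^θ μ_j^{1−θ})) has Schur multiplier norm at most K, for θ = 1/2. -/
lemma sum_sq_ge (n : ℕ) : (n : ℝ)^3 / 3 ≤ ∑ i ∈ Finset.range n, ((i : ℝ) + 1)^2 := by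
  induction n with
  | zero => simp
  | succ m ih =>
    rw [Finset.sum_range_succ]
    push_cast
    nlinarith [ih, (Nat.cast_nonneg m : (0:ℝ) ≤ m)]

-- lower bound helper: opNorm of A ≥ ‖A e₀‖
lemma opNorm_ge_col {n : ℕ} [NeZero n] (A : Matrix (Fin n) (Fin n) ℂ) :
    Real.sqrt (∑ i, ‖A i 0‖^2) ≤ matOpNorm A := by
  set T := Matrix.toEuclideanCLM (𝕜 := ℂ) (n := Fin n) A
  set y : EuclideanSpace ℂ (Fin n) := (WithLp.equiv 2 (Fin n → ℂ)).symm (Pi.single 0 1)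
  have hTy : T y = (WithLp.equiv 2 (Fin n → ℂ)).symm (fun i => A i 0) := by
    simp only [T, y, WithLp.equiv_symm_apply, Matrix.toEuclideanCLM_toLp, Matrix.toLin'_apply, Matrix.mulVec_single, mul_one, MulOpposite.op_one, one_smul]
    rfl
  have hny : ‖y‖ = 1 := by
    rw [EuclideanSpace.norm_eq]
    have : ∀ i : Fin n, ‖(WithLp.equiv 2 (Fin n → ℂ)).symm (Pi.single (0:Fin n) (1:ℂ)) i‖^2
        = if i = 0 then 1 else 0 := by
      intro i
      by_cases h : i = 0 <;> simp [h, Pi.single_apply]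
    simp only [y, this]
    simp
  have h1 : ‖T y‖ ≤ ‖T‖ := by
    calc ‖T y‖ ≤ ‖T‖ * ‖y‖ := T.le_opNorm y
    _ = ‖T‖ := by rw [hny, mul_one]
  refine le_trans (le_of_eq ?_) h1
  rw [hTy, EuclideanSpace.norm_eq]
  rfl

lemma opNorm_ones_le (n : ℕ) :
    matOpNorm (Matrix.of fun _ _ : Fin n => (1 : ℂ)) ≤ n := by
  apply ContinuousLinearMap.opNorm_le_bound _ (by positivity)
  intro y
  set s : ℂ := ∑ j, y j with hs
  have hTy : Matrix.toEuclideanCLM (𝕜 := ℂ) (n := Fin n) (Matrix.of fun _ _ => (1 : ℂ)) y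
      = (WithLp.equiv 2 (Fin n → ℂ)).symm (fun _ => s) := by
    have : y = (WithLp.equiv 2 (Fin n → ℂ)).symm (fun j => y j) := rfl
    rw [this]
    simp only [WithLp.equiv_symm_apply, Matrix.toEuclideanCLM_toLp, Matrix.toLin'_apply]
    congr 1
    funext i
    simp [Matrix.mulVec, dotProduct, hs]
  rw [hTy, EuclideanSpace.norm_eq, EuclideanSpace.norm_eq]
  have hcs : ‖s‖^2 ≤ (n : ℝ) * ∑ j, ‖y j‖^2 := by
    have h1 : ‖s‖ ≤ ∑ j, ‖y j‖ := norm_sum_le _ _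
    have h2 : (∑ j, ‖y j‖)^2 ≤ (n : ℝ) * ∑ j, ‖y j‖^2 := by
      have := sq_sum_le_card_mul_sum_sq (s := (Finset.univ : Finset (Fin n)))
        (f := fun j => ‖y j‖)
      simpa using this
    calc ‖s‖^2 ≤ (∑ j, ‖y j‖)^2 := by
          apply sq_le_sq' _ h1
          nlinarith [norm_nonneg s, Finset.sum_nonneg (fun j (_ : j ∈ Finset.univ) => norm_nonneg (y j))]
    _ ≤ _ := h2
  have : ∑ _i : Fin n, ‖s‖^2 = (n : ℝ) * ‖s‖^2 := by simp [Finset.sum_const, mul_comm]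
  calc Real.sqrt (∑ _i : Fin n, ‖((WithLp.equiv 2 (Fin n → ℂ)).symm (fun _ => s) : EuclideanSpace ℂ (Fin n)) _i‖^2)
      = Real.sqrt ((n : ℝ) * ‖s‖^2) := by rw [← this]; rfl
    _ ≤ Real.sqrt ((n : ℝ) * ((n : ℝ) * ∑ j, ‖y j‖^2)) := by
        apply Real.sqrt_le_sqrt
        exact mul_le_mul_of_nonneg_left hcs (by positivity)
    _ = (n : ℝ) * Real.sqrt (∑ j, ‖y j‖^2) := by
        rw [show (n:ℝ) * ((n:ℝ) * ∑ j, ‖y j‖^2) = (n:ℝ)^2 * ∑ j, ‖y j‖^2 by ring,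
          Real.sqrt_mul (by positivity), Real.sqrt_sq (by positivity)]

theorem stmt_13 :
    ¬ ∃ K : ℝ, ∀ (n : ℕ) (lam mu : Fin n → ℝ),
        (∀ i, 0 < lam i) → (∀ i, 0 < mu i) →
        ∀ x : Matrix (Fin n) (Fin n) ℂ,
          matOpNorm (Matrix.of fun i j =>
              ((((lam i + lam j) * (mu i + mu j)) /
                ((lam i ^ ((1 : ℝ) / 2) * mu i ^ ((1 : ℝ) / 2) +
                  lam j ^ ((1 : ℝ) / 2) * mu j ^ ((1 : ℝ) / 2)) *
                 (lam i ^ ((1 : ℝ) / 2) * mu i ^ ((1 : ℝ) / 2) +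
                  lam j ^ ((1 : ℝ) / 2) * mu j ^ ((1 : ℝ) / 2))) : ℝ) : ℂ) * x i j)
            ≤ K * matOpNorm x := by
  rintro ⟨K, hK⟩
  set K' : ℝ := max K 1 with hK'def
  have hK'1 : (1 : ℝ) ≤ K' := le_max_right _ _
  have hKK' : K ≤ K' := le_max_left _ _
  have hK'0 : (0 : ℝ) < K' := lt_of_lt_of_le one_pos hK'1
  set n : ℕ := ⌈48 * K' ^ 2⌉₊ + 1 with hndef
  have hn : 48 * K' ^ 2 < (n : ℝ) := by
    have h1 := Nat.le_ceil (48 * K' ^ 2)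
    have : ((⌈48 * K' ^ 2⌉₊ : ℝ)) < (n : ℝ) := by
      rw [hndef]; push_cast; linarith
    linarith
  have hn1 : 1 ≤ n := by omega
  haveI : NeZero n := ⟨by omega⟩
  set lam : Fin n → ℝ := fun i => (i : ℝ) + 1 with hlamdef
  set mu : Fin n → ℝ := fun i => ((i : ℝ) + 1)⁻¹ with hmudef
  have hlam : ∀ i, 0 < lam i := fun i => by positivity
  have hmu : ∀ i, 0 < mu i := fun i => by positivity
  have hone : ∀ i : Fin n, lam i ^ ((1 : ℝ) / 2) * mu i ^ ((1 : ℝ) / 2) = 1 := by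
    intro i
    rw [← Real.mul_rpow (hlam i).le (hmu i).le]
    rw [show lam i * mu i = 1 by
      simp only [hlamdef, hmudef]
      exact mul_inv_cancel₀ (by positivity)]
    exact Real.one_rpow _
  have h := hK n lam mu hlam hmu (Matrix.of fun _ _ => (1 : ℂ))
  have hM : (Matrix.of fun i j =>
              ((((lam i + lam j) * (mu i + mu j)) /
                ((lam i ^ ((1 : ℝ) / 2) * mu i ^ ((1 : ℝ) / 2) +
                  lam j ^ ((1 : ℝ) / 2) * mu j ^ ((1 : ℝ) / 2)) *
                 (lam i ^ ((1 : ℝ) / 2) * mu i ^ ((1 : ℝ) / 2) +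
                  lam j ^ ((1 : ℝ) / 2) * mu j ^ ((1 : ℝ) / 2))) : ℝ) : ℂ) *
                (Matrix.of fun _ _ => (1 : ℂ)) i j)
      = Matrix.of fun i j : Fin n =>
          ((((lam i + lam j) * (mu i + mu j)) / 4 : ℝ) : ℂ) := by
    funext i j
    simp only [Matrix.of_apply, hone, mul_one]
    norm_num
  rw [hM] at h
  -- lower bound for the left side
  have hlow := opNorm_ge_col (Matrix.of fun i j : Fin n =>
          ((((lam i + lam j) * (mu i + mu j)) / 4 : ℝ) : ℂ))
  have hentry : ∀ i : Fin n, ((i : ℝ) + 1) ^ 2 / 16 ≤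
      ‖(Matrix.of fun i j : Fin n =>
          ((((lam i + lam j) * (mu i + mu j)) / 4 : ℝ) : ℂ)) i 0‖ ^ 2 := by
    intro i
    have h0 : lam (0 : Fin n) = 1 := by simp [hlamdef]
    have h0' : mu (0 : Fin n) = 1 := by simp [hmudef]
    have hval : (Matrix.of fun i j : Fin n =>
          ((((lam i + lam j) * (mu i + mu j)) / 4 : ℝ) : ℂ)) i 0
        = (((lam i + 1) * (mu i + 1) / 4 : ℝ) : ℂ) := by
      simp [h0, h0']
    rw [hval]
    rw [Complex.norm_real, Real.norm_eq_abs]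
    have hpos : (0 : ℝ) < (lam i + 1) * (mu i + 1) / 4 := by
      have := hlam i; have := hmu i; positivity
    rw [abs_of_pos hpos]
    have hge : ((i : ℝ) + 1) / 4 ≤ (lam i + 1) * (mu i + 1) / 4 := by
      simp only [hlamdef, hmudef]
      have ha : (0 : ℝ) < (i : ℝ) + 1 := by positivity
      have hinv : (0:ℝ) < ((i : ℝ) + 1)⁻¹ := by positivity
      have key : ((i:ℝ)+1) ≤ ((i:ℝ)+1+1) * (((i:ℝ)+1)⁻¹+1) := by
        nlinarith [mul_inv_cancel₀ ha.ne']
      linarith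
    calc ((i : ℝ) + 1) ^ 2 / 16 = (((i : ℝ) + 1) / 4) ^ 2 := by ring
    _ ≤ ((lam i + 1) * (mu i + 1) / 4) ^ 2 :=
        pow_le_pow_left₀ (by positivity) hge 2
  have hsum : (n : ℝ) ^ 3 / 48 ≤ ∑ i : Fin n,
      ‖(Matrix.of fun i j : Fin n =>
          ((((lam i + lam j) * (mu i + mu j)) / 4 : ℝ) : ℂ)) i 0‖ ^ 2 := by
    calc (n : ℝ) ^ 3 / 48 = ((n : ℝ) ^ 3 / 3) / 16 := by ring
    _ ≤ (∑ i ∈ Finset.range n, ((i : ℝ) + 1) ^ 2) / 16 := by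
        apply div_le_div_of_nonneg_right (sum_sq_ge n) (by norm_num) |>.trans_eq rfl
    _ = ∑ i : Fin n, ((i : ℝ) + 1) ^ 2 / 16 := by
        rw [Finset.sum_div, Fin.sum_univ_eq_sum_range (fun i => ((i:ℝ)+1)^2 / 16)]
    _ ≤ _ := Finset.sum_le_sum fun i _ => hentry i
  have hsqrt : Real.sqrt ((n : ℝ) ^ 3 / 48) ≤ matOpNorm (Matrix.of fun i j : Fin n =>
          ((((lam i + lam j) * (mu i + mu j)) / 4 : ℝ) : ℂ)) :=
    le_trans (Real.sqrt_le_sqrt hsum) hlow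
  -- upper bound for the right side
  have hJ0 : (0 : ℝ) ≤ matOpNorm (Matrix.of fun _ _ : Fin n => (1 : ℂ)) := norm_nonneg _
  have hup : K * matOpNorm (Matrix.of fun _ _ : Fin n => (1 : ℂ)) ≤ K' * n := by
    calc K * matOpNorm (Matrix.of fun _ _ : Fin n => (1 : ℂ))
        ≤ K' * matOpNorm (Matrix.of fun _ _ : Fin n => (1 : ℂ)) :=
          mul_le_mul_of_nonneg_right hKK' hJ0
    _ ≤ K' * n := mul_le_mul_of_nonneg_left (opNorm_ones_le n) hK'0.le
  -- contradiction
  have hfinal : K' * n < Real.sqrt ((n : ℝ) ^ 3 / 48) := by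
    rw [show (K' * n : ℝ) = Real.sqrt ((K' * n) ^ 2) from
      (Real.sqrt_sq (by positivity)).symm]
    apply Real.sqrt_lt_sqrt (by positivity)
    have hnpos : (0 : ℝ) < n := by exact_mod_cast hn1
    calc (K' * n) ^ 2 = (K' ^ 2) * (n : ℝ) ^ 2 := by ring
    _ < ((n : ℝ) / 48) * (n : ℝ) ^ 2 := by
        apply mul_lt_mul_of_pos_right _ (by positivity)
        linarith
    _ = (n : ℝ) ^ 3 / 48 := by ring
  linarith
end

section
/- Let d = Σ_{i=1}^k λ_i e_i be a positive invertible operator on a Hilbert space, where λ₁ < … < λ_k are positive reals and e₁,…,e_k are mutually orthogonal projections summing to the identity. Define L_d(x) = dx, R_d(x) = xd on bounded operators. Then for every bounded operator x, the operator Σ_{i,j} (√(λ_i λ_j)/(λ_i + λ_j)) e_i x e_j equals ∫_ℝ e^{it·log d} x e^{−it·log d} dt/(2cosh(πt)), and its operator norm is at most ‖x‖/2. -/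
/-!
The integrand `d ^ (i t) x d ^ (-i t)` expands as `∑ i j, (lam i / lam j) ^ (i t) • e i x e j`,
so the integral identity reduces to the Fourier transform of `sech`,
`∫ e ^ (i s t) / (2 cosh (π t)) dt = 1 / (2 cosh (s / 2))`, at `s = log lam i - log lam j`.
That transform is a Beta integral in disguise: substituting `x = sigmoid v` turns
`B(a, 1 - a) = ∫₀¹ x ^ (a - 1) (1 - x) ^ (-a) dx` into `∫ e ^ ((a - 1/2) v) / (2 cosh (v / 2)) dv`,
and Euler's reflection formula gives `B(a, 1 - a) = π / sin (π a)`.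
For the norm bound, `d ^ (i t)` is unitary, so the integrand has norm `‖x‖`, and the weight
`1 / (2 cosh (π t))` has total mass `1 / 2` (the transform at `s = 0`).
-/

open Real Complex MeasureTheory

lemma integrable_inv_two_mul_cosh_pi_mul :
    Integrable (fun t : ℝ => (2 * Real.cosh (π * t))⁻¹) := by
  refine integrable_inv_one_add_sq.mono' (by fun_prop) (.of_forall fun t => ?_)
  have hcosh : 1 + (π * t) ^ 2 / 4 ≤ Real.cosh (π * t) := by
    rw [← Real.cosh_abs, Real.cosh_eq]
    nlinarith [quadratic_le_exp_of_nonneg (abs_nonneg (π * t)), add_one_le_exp (-|π * t|),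
      sq_abs (π * t)]
  have hpi : 2 ≤ π ^ 2 := by nlinarith [pi_gt_three]
  rw [norm_inv, Real.norm_of_nonneg (by positivity)]
  gcongr
  nlinarith [sq_nonneg t]

lemma Real.sigmoid_eq_exp_div_two_mul_cosh (v : ℝ) :
    sigmoid v = Real.exp (v / 2) / (2 * Real.cosh (v / 2)) := by
  have hsq : Real.exp (-v) = Real.exp (-(v / 2)) * Real.exp (-(v / 2)) := by
    rw [← Real.exp_add]; ring_nf
  have hinv : Real.exp (v / 2) * Real.exp (-(v / 2)) = 1 := by
    rw [← Real.exp_add]; simp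
  rw [sigmoid_def, Real.cosh_eq, hsq]
  field_simp
  linear_combination (-Real.exp (-(v / 2))) * hinv

lemma ofReal_exp_div_cpow {x c : ℝ} (hc : 0 < c) (w : ℂ) :
    ((Real.exp x / c : ℝ) : ℂ) ^ w = cexp ((x - Real.log c) * w) := by
  rw [cpow_def_of_ne_zero (by simp; positivity), ← ofReal_log (by positivity),
    Real.log_div (by positivity) hc.ne', Real.log_exp]
  push_cast; ring_nf

lemma sigmoid_deriv_smul_betaIntegrand (a : ℂ) (v : ℝ) :
    (sigmoid v * (1 - sigmoid v)) •
        ((sigmoid v : ℂ) ^ (a - 1) * (1 - (sigmoid v : ℂ)) ^ ((1 - a) - 1)) =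
      cexp ((a - 1 / 2) * v) / (2 * Real.cosh (v / 2) : ℝ) := by
  have hc : 0 < 2 * Real.cosh (v / 2) := by positivity
  have hneg : 1 - sigmoid v = Real.exp (-v / 2) / (2 * Real.cosh (v / 2)) := by
    rw [← sigmoid_neg, sigmoid_eq_exp_div_two_mul_cosh, neg_div, Real.cosh_neg]
  rw [show (1 - (sigmoid v : ℂ)) = ((1 - sigmoid v : ℝ) : ℂ) by push_cast; rfl, hneg,
    sigmoid_eq_exp_div_two_mul_cosh, ofReal_exp_div_cpow hc, ofReal_exp_div_cpow hc,
    ← Complex.exp_add, real_smul]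
  set c := 2 * Real.cosh (v / 2)
  have hlog : cexp (Real.log c) = c := by rw [← ofReal_exp, Real.exp_log hc]
  have hexp : cexp (v / 2) * cexp (-(v / 2)) = 1 := by rw [← Complex.exp_add]; ring_nf; simp
  rw [show ((v / 2 : ℝ) - Real.log c : ℂ) * (a - 1) + ((-v / 2 : ℝ) - Real.log c) * (1 - a - 1)
      = (a - 1 / 2) * v + Real.log c by push_cast; ring, Complex.exp_add, hlog]
  push_cast
  field_simp
  linear_combination hexp / (c : ℂ)

lemma betaIntegral_one_sub_eq_integral (a : ℂ) :
    betaIntegral a (1 - a) = ∫ v : ℝ, cexp ((a - 1 / 2) * v) / (2 * Real.cosh (v / 2) : ℝ) := by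
  rw [betaIntegral, intervalIntegral.integral_of_le zero_le_one, integral_Ioc_eq_integral_Ioo,
    ← range_sigmoid, ← Set.image_univ, integral_image_eq_integral_abs_deriv_smul MeasurableSet.univ
      (fun v _ => (hasDerivAt_sigmoid v).hasDerivWithinAt) sigmoid_injective.injOn,
    setIntegral_univ]
  congr 1 with v
  have hderiv_pos : 0 < sigmoid v * (1 - sigmoid v) :=
    mul_pos (sigmoid_pos v) (sub_pos.2 (sigmoid_lt_one v))
  rw [abs_of_pos hderiv_pos, sigmoid_deriv_smul_betaIntegrand]

lemma integral_exp_mul_I_div_two_mul_cosh_half (w : ℝ) :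
    ∫ v : ℝ, cexp (I * w * v) / (2 * Real.cosh (v / 2) : ℝ) = π / Real.cosh (π * w) := by
  set a : ℂ := 1 / 2 + I * w
  have ha : 0 < a.re := by simp [a]
  have ha' : 0 < (1 - a).re := by simp [a]; norm_num
  have hbeta := Gamma_mul_Gamma_eq_betaIntegral ha ha'
  rw [add_sub_cancel, Complex.Gamma_one, one_mul, Complex.Gamma_mul_Gamma_one_sub,
    betaIntegral_one_sub_eq_integral, add_sub_cancel_left] at hbeta
  rw [← hbeta, show (π : ℂ) * a = π / 2 - (-(π * w)) * I by simp only [a]; ring,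
    Complex.sin_pi_div_two_sub, cos_mul_I, Complex.cosh_neg]
  push_cast; rfl

lemma integral_inv_two_mul_cosh_pi_mul_smul_exp (s : ℝ) :
    ∫ t : ℝ, (2 * Real.cosh (π * t))⁻¹ • cexp (I * s * t) = ((2 * Real.cosh (s / 2))⁻¹ : ℝ) := by
  have hscale := Measure.integral_comp_mul_left
    (fun v : ℝ => cexp (I * ↑(s / (2 * π)) * v) / (2 * Real.cosh (v / 2) : ℝ)) (2 * π)
  rw [integral_exp_mul_I_div_two_mul_cosh_half, abs_of_pos (by positivity)] at hscale
  simp_rw [show ∀ t : ℝ, 2 * π * t / 2 = π * t from fun t => by ring,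
    show π * (s / (2 * π)) = s / 2 by field_simp] at hscale
  convert hscale using 1
  · congr 1 with t
    rw [real_smul]
    push_cast
    field_simp
  · rw [real_smul]
    push_cast
    field_simp

lemma integral_inv_two_mul_cosh_pi_mul : ∫ t : ℝ, (2 * Real.cosh (π * t))⁻¹ = 1 / 2 := by
  have h := integral_inv_two_mul_cosh_pi_mul_smul_exp 0
  simp only [ofReal_zero, mul_zero, zero_mul, Complex.exp_zero, zero_div, Real.cosh_zero] at h
  rw [integral_smul_const, real_smul, mul_one, mul_one] at h
  rw [one_div]
  exact_mod_cast h

lemma inv_two_mul_cosh_half_log_sub_log {a b : ℝ} (ha : 0 < a) (hb : 0 < b) :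
    (2 * Real.cosh ((Real.log a - Real.log b) / 2))⁻¹ = √(a * b) / (a + b) := by
  have hsa := Real.sqrt_pos.2 ha
  have hsb := Real.sqrt_pos.2 hb
  rw [show (Real.log a - Real.log b) / 2 = Real.log (√a / √b) by
      rw [Real.log_div hsa.ne' hsb.ne', Real.log_sqrt ha.le, Real.log_sqrt hb.le]; ring,
    Real.cosh_log (by positivity), Real.sqrt_mul ha.le]
  field_simp
  rw [Real.sq_sqrt ha.le, Real.sq_sqrt hb.le]

lemma integral_inv_two_mul_cosh_pi_mul_smul_cpow {a b : ℝ} (ha : 0 < a) (hb : 0 < b) :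
    ∫ t : ℝ, (2 * Real.cosh (π * t))⁻¹ • ((a : ℂ) ^ (I * t) * (b : ℂ) ^ (I * ↑(-t)))
      = ((√(a * b) / (a + b) : ℝ) : ℂ) := by
  have hcpow : ∀ t : ℝ, (a : ℂ) ^ (I * t) * (b : ℂ) ^ (I * ↑(-t))
      = cexp (I * ↑(Real.log a - Real.log b) * t) := fun t => by
    rw [cpow_def_of_ne_zero (by exact_mod_cast ha.ne'),
      cpow_def_of_ne_zero (by exact_mod_cast hb.ne'), ← Complex.exp_add,
      ← ofReal_log ha.le, ← ofReal_log hb.le]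
    push_cast; ring_nf
  simp_rw [hcpow, integral_inv_two_mul_cosh_pi_mul_smul_exp,
    inv_two_mul_cosh_half_log_sub_log ha hb]

lemma norm_integral_inv_two_mul_cosh_pi_mul_smul_le {E : Type*} [NormedAddCommGroup E]
    [NormedSpace ℝ E] {f : ℝ → E} {C : ℝ} (hf : ∀ t, ‖f t‖ ≤ C) :
    ‖∫ t : ℝ, (2 * Real.cosh (π * t))⁻¹ • f t‖ ≤ C / 2 := by
  calc ‖∫ t : ℝ, (2 * Real.cosh (π * t))⁻¹ • f t‖
      ≤ ∫ t : ℝ, (2 * Real.cosh (π * t))⁻¹ * C :=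
        norm_integral_le_of_norm_le (integrable_inv_two_mul_cosh_pi_mul.mul_const C)
          (.of_forall fun t => by
            rw [norm_smul, Real.norm_of_nonneg (by positivity)]
            gcongr
            exact hf t)
    _ = C / 2 := by rw [integral_mul_const, integral_inv_two_mul_cosh_pi_mul]; ring

section imagPow

variable {ι A : Type*} [Fintype ι]

/-- The unitary `d ^ (i t) = exp (i t log d)` for `d = ∑ i, lam i • e i`. -/
noncomputable def imagPow [Ring A] [Algebra ℂ A] (lam : ι → ℝ) (e : ι → A) (t : ℝ) : A :=
  ∑ i, ((lam i : ℂ) ^ (I * t)) • e i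

lemma imagPow_mul_mul_imagPow [Ring A] [Algebra ℂ A] (lam : ι → ℝ) (e : ι → A) (x : A)
    (t s : ℝ) :
    imagPow lam e t * x * imagPow lam e s
      = ∑ i, ∑ j, ((lam i : ℂ) ^ (I * t) * (lam j : ℂ) ^ (I * s)) • (e i * x * e j) := by
  simp only [imagPow, Finset.sum_mul, Finset.mul_sum, smul_mul_assoc, mul_smul_comm,
    Finset.smul_sum, smul_smul]
  rw [Finset.sum_comm]
  simp_rw [mul_comm ((lam _ : ℂ) ^ (I * s))]

lemma imagPow_mul_imagPow [Ring A] [Algebra ℂ A] {lam : ι → ℝ} (hpos : ∀ i, 0 < lam i)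
    {e : ι → A} (hproj : ∀ i, IsIdempotentElem (e i)) (horth : ∀ i j, i ≠ j → e i * e j = 0)
    (t s : ℝ) :
    imagPow lam e t * imagPow lam e s = imagPow lam e (t + s) := by
  have h := imagPow_mul_mul_imagPow lam e 1 t s
  rw [mul_one] at h
  rw [h, imagPow]
  refine Finset.sum_congr rfl fun i _ => ?_
  rw [Finset.sum_eq_single i (fun j _ hji => by rw [mul_one, horth i j (Ne.symm hji), smul_zero])
    (by simp), mul_one, (hproj i).eq, ← cpow_add _ _ (by exact_mod_cast (hpos i).ne'), ← mul_add]
  push_cast; rfl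

lemma imagPow_zero [Ring A] [Algebra ℂ A] (lam : ι → ℝ) {e : ι → A} (hsum : ∑ i, e i = 1) :
    imagPow lam e 0 = 1 := by
  simp [imagPow, hsum]

lemma star_imagPow [Ring A] [StarRing A] [Algebra ℂ A] [StarModule ℂ A] {lam : ι → ℝ}
    (hpos : ∀ i, 0 < lam i) {e : ι → A} (hsa : ∀ i, IsSelfAdjoint (e i)) (t : ℝ) :
    star (imagPow lam e t) = imagPow lam e (-t) := by
  simp only [imagPow, star_sum, star_smul, (hsa _).star_eq]
  refine Finset.sum_congr rfl fun i _ => ?_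
  rw [cpow_def_of_ne_zero (by exact_mod_cast (hpos i).ne'),
    cpow_def_of_ne_zero (by exact_mod_cast (hpos i).ne'), ← ofReal_log (hpos i).le,
    Complex.star_def, ← Complex.exp_conj, map_mul, map_mul, conj_ofReal, conj_ofReal, conj_I]
  push_cast
  ring_nf

lemma imagPow_mem_unitary [Ring A] [StarRing A] [Algebra ℂ A] [StarModule ℂ A] {lam : ι → ℝ}
    (hpos : ∀ i, 0 < lam i) {e : ι → A} (hproj : ∀ i, IsIdempotentElem (e i))
    (hsa : ∀ i, IsSelfAdjoint (e i)) (horth : ∀ i j, i ≠ j → e i * e j = 0)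
    (hsum : ∑ i, e i = 1) (t : ℝ) :
    imagPow lam e t ∈ unitary A := by
  rw [Unitary.mem_iff, star_imagPow hpos hsa, imagPow_mul_imagPow hpos hproj horth,
    imagPow_mul_imagPow hpos hproj horth, neg_add_cancel, add_neg_cancel, imagPow_zero lam hsum]
  exact ⟨rfl, rfl⟩

lemma integral_inv_two_mul_cosh_pi_mul_smul_imagPow_conj [NormedRing A] [NormedAlgebra ℂ A]
    [CompleteSpace A] {lam : ι → ℝ} (hpos : ∀ i, 0 < lam i) (e : ι → A) (x : A) :
    ∫ t : ℝ, (2 * Real.cosh (π * t))⁻¹ • (imagPow lam e t * x * imagPow lam e (-t))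
      = ∑ i, ∑ j, ((√(lam i * lam j) / (lam i + lam j) : ℝ) : ℂ) • (e i * x * e j) := by
  have hunimod : ∀ i (t : ℝ), ‖(lam i : ℂ) ^ (I * t)‖ = 1 := fun i t => by
    simp [norm_cpow_eq_rpow_re_of_pos (hpos i)]
  have hint : ∀ i j, Integrable fun t : ℝ => ((2 * Real.cosh (π * t))⁻¹ •
      ((lam i : ℂ) ^ (I * t) * (lam j : ℂ) ^ (I * ↑(-t)))) • (e i * x * e j) := fun i j => by
    refine (integrable_inv_two_mul_cosh_pi_mul.mono'
      (Measurable.aestronglyMeasurable (by fun_prop)) (.of_forall fun t => ?_)).smul_const _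
    rw [norm_smul, norm_mul, hunimod, hunimod, Real.norm_of_nonneg (by positivity), mul_one,
      mul_one]
  simp_rw [imagPow_mul_mul_imagPow, Finset.smul_sum, ← smul_assoc]
  rw [integral_finsetSum _ fun i _ => integrable_finsetSum _ fun j _ => hint i j]
  refine Finset.sum_congr rfl fun i _ => ?_
  rw [integral_finsetSum _ fun j _ => hint i j]
  refine Finset.sum_congr rfl fun j _ => ?_
  rw [integral_smul_const, integral_inv_two_mul_cosh_pi_mul_smul_cpow (hpos i) (hpos j)]

lemma norm_imagPow_mul_mul_imagPow [CStarAlgebra A] {lam : ι → ℝ} (hpos : ∀ i, 0 < lam i)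
    {e : ι → A} (hproj : ∀ i, IsIdempotentElem (e i)) (hsa : ∀ i, IsSelfAdjoint (e i))
    (horth : ∀ i j, i ≠ j → e i * e j = 0) (hsum : ∑ i, e i = 1) (x : A) (t s : ℝ) :
    ‖imagPow lam e t * x * imagPow lam e s‖ = ‖x‖ := by
  rw [CStarRing.norm_mul_mem_unitary _ (imagPow_mem_unitary hpos hproj hsa horth hsum s),
    CStarRing.norm_mem_unitary_mul _ (imagPow_mem_unitary hpos hproj hsa horth hsum t)]

end imagPow

theorem stmt_14_general (H : Type*) [NormedAddCommGroup H] [InnerProductSpace ℂ H]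
    [CompleteSpace H] (k : ℕ) (lam : Fin k → ℝ)
    (hpos : ∀ i, 0 < lam i)
    (e : Fin k → H →L[ℂ] H)
    (hproj : ∀ i, IsIdempotentElem (e i))
    (hsa : ∀ i, ContinuousLinearMap.adjoint (e i) = e i)
    (horth : ∀ i j, i ≠ j → e i * e j = 0)
    (hsum : ∑ i, e i = 1)
    (u : ℝ → H →L[ℂ] H)
    (hu : ∀ t : ℝ, u t = ∑ i, ((lam i : ℂ) ^ (Complex.I * t)) • e i)
    (x : H →L[ℂ] H) :
    (∑ i, ∑ j, ((Real.sqrt (lam i * lam j) / (lam i + lam j) : ℝ) : ℂ) •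
        (e i * x * e j))
      = (∫ t : ℝ, (2 * Real.cosh (π * t))⁻¹ • (u t * x * u (-t))) ∧
    ‖∑ i, ∑ j, ((Real.sqrt (lam i * lam j) / (lam i + lam j) : ℝ) : ℂ) •
        (e i * x * e j)‖ ≤ ‖x‖ / 2 := by
  obtain rfl : u = imagPow lam e := funext hu
  have hsa' : ∀ i, IsSelfAdjoint (e i) := fun i =>
    (ContinuousLinearMap.star_eq_adjoint (e i)).trans (hsa i)
  rw [← integral_inv_two_mul_cosh_pi_mul_smul_imagPow_conj hpos e x]
  exact ⟨rfl, norm_integral_inv_two_mul_cosh_pi_mul_smul_le fun t =>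
    (norm_imagPow_mul_mul_imagPow hpos hproj hsa' horth hsum x t (-t)).le⟩

theorem stmt_14 (H : Type*) [NormedAddCommGroup H] [InnerProductSpace ℂ H]
    [CompleteSpace H] (k : ℕ) (lam : Fin k → ℝ)
    (hpos : ∀ i, 0 < lam i) (hmono : StrictMono lam)
    (e : Fin k → H →L[ℂ] H)
    (hproj : ∀ i, IsIdempotentElem (e i))
    (hsa : ∀ i, ContinuousLinearMap.adjoint (e i) = e i)
    (horth : ∀ i j, i ≠ j → e i * e j = 0)
    (hsum : ∑ i, e i = 1)
    (u : ℝ → H →L[ℂ] H)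
    (hu : ∀ t : ℝ, u t = ∑ i, ((lam i : ℂ) ^ (Complex.I * t)) • e i)
    (x : H →L[ℂ] H) :
    (∑ i, ∑ j, ((Real.sqrt (lam i * lam j) / (lam i + lam j) : ℝ) : ℂ) •
        (e i * x * e j))
      = (∫ t : ℝ, (2 * Real.cosh (π * t))⁻¹ • (u t * x * u (-t))) ∧
    ‖∑ i, ∑ j, ((Real.sqrt (lam i * lam j) / (lam i + lam j) : ℝ) : ℂ) •
        (e i * x * e j)‖ ≤ ‖x‖ / 2 :=
  stmt_14_general H k lam hpos e hproj hsa horth hsum u hu x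
end

section
/- Let d = Σ_{i=1}^k λ_i e_i be as above (λ_i > 0, e_i mutually orthogonal projections summing to 1) and let f : ℝ₊ → ℝ₊ be nondecreasing with f(λ_i) > 0. For a finite matrix x of operators, let T₊(x) = Σ_{j ≥ i} e_i x e_j be the upper triangular part with respect to the spectral ordering of d. Then for every bounded operator x: (2/3)·‖T₊(x) f(d)‖ ≤ ‖f(d) T₊(x) + T₊(x) f(d)‖ ≤ 2·‖T₊(x) f(d)‖, where ‖·‖ is the operator norm. -/
/-!
Write `a i = f (lam i)`. Compressing by the projections, `F * T` and `F * T + T * F` are the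
Schur multipliers of the upper-triangular part of `x` with symbols `a i` and `a i + a j`. As `a`
is nondecreasing, `a i = min (a i) (a j)` on the upper triangle, so `F * T` is the Schur
multiplier with symbol `min (a i) (a j) / (a i + a j)` applied to `F * T + T * F`. This symbol is
positive semidefinite: it is the Hadamard product of the min kernel (a Gram matrix of indicators
of intervals) and the Cauchy kernel (a Gram matrix of exponentials in `L²(0, ∞)`). A Schur
multiplier whose symbol is `Bᵀ B` acts as `S ↦ ∑ p, A p * S * A p` with `∑ p, A p ^ 2` the
diagonal operator of the symbol, hence has norm at most the largest diagonal entry, here `1 / 2`.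
Thus `‖F * T‖ ≤ ‖F * T + T * F‖ / 2`, and both bounds follow from the triangle inequality.
-/

open Finset MeasureTheory Set Real
open scoped InnerProductSpace Matrix ComplexOrder

namespace Matrix

open scoped MatrixOrder in
theorem PosSemidef.exists_eq_conjTranspose_mul_self {𝕜 ι : Type*} [RCLike 𝕜] [Fintype ι]
    [DecidableEq ι] {M : Matrix ι ι 𝕜} (hM : M.PosSemidef) :
    ∃ B : Matrix ι ι 𝕜, M = Bᴴ * B :=
  ⟨CFC.sqrt M, by
    rw [← star_eq_conjTranspose, (CFC.sqrt_nonneg M).isSelfAdjoint.star_eq,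
      CFC.sqrt_mul_sqrt_self M (nonneg_iff_posSemidef.mpr hM)]⟩

variable {ι : Type*} [Finite ι]

theorem posSemidef_min {a : ι → ℝ} (ha : ∀ i, 0 ≤ a i) :
    (of fun i j => min (a i) (a j)).PosSemidef := by
  convert posSemidef_matrix_measure_inter (μ := volume) (s := fun i => Ioc 0 (a i))
    (fun _ => measurableSet_Ioc) (fun _ => measure_Ioc_lt_top.ne) using 1
  ext i j
  rw [of_apply, of_apply, Set.Ioc_inter_Ioc, max_self,
    Real.volume_real_Ioc_of_le (le_min (ha i) (ha j)), sub_zero]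

theorem posSemidef_inv_add {a : ι → ℝ} (ha : ∀ i, 0 < a i) :
    (of fun i j => (a i + a j)⁻¹).PosSemidef := by
  have hexp_mul : ∀ i j t, exp (-a i * t) * exp (-a j * t) = exp (-(a i + a j) * t) := by
    intro i j t; rw [← Real.exp_add]; ring_nf
  have hexp : ∀ i, MemLp (fun t => exp (-a i * t)) 2 (volume.restrict (Ioi 0)) := fun i => by
    refine (memLp_two_iff_integrable_sq (by fun_prop)).2 ?_
    simpa only [sq, hexp_mul] using
      (exp_neg_integrableOn_Ioi 0 (add_pos (ha i) (ha i))).integrable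
  have hgram : (of fun i j => (a i + a j)⁻¹) = gram ℝ fun i => (hexp i).toLp := by
    ext i j
    rw [of_apply, gram_apply, L2.inner_def]
    have hae : (fun t => ⟪(hexp i).toLp _ t, (hexp j).toLp _ t⟫_ℝ)
        =ᵐ[volume.restrict (Ioi 0)] fun t => exp (-(a i + a j) * t) := by
      filter_upwards [(hexp i).coeFn_toLp, (hexp j).coeFn_toLp] with t hi hj
      simp only [hi, hj, inner_apply, hexp_mul]
    rw [integral_congr_ae hae, integral_exp_mul_Ioi (by linarith [ha i, ha j]), mul_zero, exp_zero]
    field_simp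
  rw [hgram]
  exact posSemidef_gram ℝ _

theorem posSemidef_min_div_add {a : ι → ℝ} (ha : ∀ i, 0 < a i) :
    (of fun i j => min (a i) (a j) / (a i + a j)).PosSemidef := by
  simpa only [hadamard, of_apply, div_eq_mul_inv] using
    (posSemidef_min fun i => (ha i).le).hadamard (posSemidef_inv_add ha)

end Matrix

section SchurMultiplier

variable {𝕜 A ι κ : Type*} [CommSemiring 𝕜] [Semiring A] [Algebra 𝕜 A]
  [Fintype ι] [Fintype κ]

def schurMul (e : ι → A) (m : ι → ι → 𝕜) (S : A) : A :=
  ∑ i, ∑ j, m i j • (e i * S * e j)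

theorem schurMul_add (e : ι → A) (m m' : ι → ι → 𝕜) (S : A) :
    schurMul e (m + m') S = schurMul e m S + schurMul e m' S := by
  simp only [schurMul, Pi.add_apply, add_smul, sum_add_distrib]

theorem schurMul_sum_mul (e : ι → A) (b c : κ → ι → 𝕜) (S : A) :
    schurMul e (fun i j => ∑ p, b p i * c p j) S
      = ∑ p, (∑ i, b p i • e i) * S * ∑ j, c p j • e j := by
  simp only [schurMul, sum_smul, sum_mul, mul_sum, smul_mul_assoc, mul_smul_comm, smul_sum,
    smul_smul]
  rw [sum_comm]
  refine (sum_congr rfl fun j _ => sum_comm).trans ?_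
  rw [sum_comm]
  exact sum_congr rfl fun p _ => sum_congr rfl fun j _ => sum_congr rfl fun i _ => by
    rw [mul_comm]

variable [DecidableEq ι] {e : ι → A} (he : ∀ i j, e i * e j = if i = j then e i else 0)
include he

theorem mul_sum_smul (c : ι → 𝕜) (i : ι) : e i * ∑ j, c j • e j = c i • e i := by
  simp [mul_sum, he]

theorem sum_smul_mul (c : ι → 𝕜) (j : ι) : (∑ i, c i • e i) * e j = c j • e j := by
  simp [sum_mul, he]

theorem mul_schurMul_mul (m : ι → ι → 𝕜) (S : A) (i j : ι) :
    e i * schurMul e m S * e j = m i j • (e i * S * e j) := by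
  simp only [schurMul, mul_sum, sum_mul, mul_smul_comm, smul_mul_assoc, ← mul_assoc, he, ite_mul,
    zero_mul, smul_ite, smul_zero, sum_ite_irrel, sum_const_zero, sum_ite_eq]
  simp [mul_assoc, he]

theorem schurMul_schurMul (m m' : ι → ι → 𝕜) (S : A) :
    schurMul e m (schurMul e m' S) = schurMul e (fun i j => m i j * m' i j) S := by
  conv_lhs => rw [schurMul]
  simp only [mul_schurMul_mul he, smul_smul]
  rfl

theorem sum_smul_mul_schurMul (c : ι → 𝕜) (m : ι → ι → 𝕜) (S : A) :
    (∑ k, c k • e k) * schurMul e m S = schurMul e (fun i j => c i * m i j) S := by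
  simp only [schurMul, mul_sum, ← mul_assoc, mul_smul_comm, sum_smul_mul he, smul_mul_assoc,
    smul_smul]
  exact sum_congr rfl fun i _ => sum_congr rfl fun j _ => by rw [mul_comm]

theorem schurMul_mul_sum_smul (c : ι → 𝕜) (m : ι → ι → 𝕜) (S : A) :
    schurMul e m S * (∑ k, c k • e k) = schurMul e (fun i j => m i j * c j) S := by
  simp only [schurMul, sum_mul, mul_assoc, smul_mul_assoc, mul_sum_smul he, mul_smul_comm,
    smul_smul]

theorem schurMul_one (m : ι → ι → 𝕜) : schurMul e m 1 = ∑ i, m i i • e i := by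
  simp [schurMul, he]

end SchurMultiplier

namespace ContinuousLinearMap

open RCLike

variable {𝕜 H ι κ : Type*} [RCLike 𝕜] [NormedAddCommGroup H] [InnerProductSpace 𝕜 H]
  [CompleteSpace H] [Fintype ι] [Fintype κ]

theorem norm_sum_star_mul_mul_le (A : κ → H →L[𝕜] H) {c : ℝ} (hc : 0 ≤ c)
    (hA : ∀ v, ∑ p, ‖A p v‖ ^ 2 ≤ c * ‖v‖ ^ 2) (S : H →L[𝕜] H) :
    ‖∑ p, star (A p) * S * A p‖ ≤ c * ‖S‖ := by
  refine opNorm_le_of_re_inner_le (by positivity) fun v w hv hw => ?_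
  have hterm : ∀ p, re ⟪(star (A p) * S * A p) v, w⟫_𝕜
      ≤ ‖S‖ * ((‖A p v‖ ^ 2 + ‖A p w‖ ^ 2) / 2) := by
    intro p
    rw [mul_apply_eq_comp, mul_apply_eq_comp, star_eq_adjoint, adjoint_inner_left]
    calc re ⟪S (A p v), A p w⟫_𝕜 ≤ ‖S (A p v)‖ * ‖A p w‖ := re_inner_le_norm _ _
      _ ≤ ‖S‖ * ‖A p v‖ * ‖A p w‖ := by gcongr; exact S.le_opNorm _
      _ ≤ ‖S‖ * ((‖A p v‖ ^ 2 + ‖A p w‖ ^ 2) / 2) := by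
        rw [mul_assoc]; gcongr; nlinarith [sq_nonneg (‖A p v‖ - ‖A p w‖)]
  calc re ⟪(∑ p, star (A p) * S * A p) v, w⟫_𝕜
        = ∑ p, re ⟪(star (A p) * S * A p) v, w⟫_𝕜 := by
        simp only [_root_.sum_apply, sum_inner, map_sum]
    _ ≤ ∑ p, ‖S‖ * ((‖A p v‖ ^ 2 + ‖A p w‖ ^ 2) / 2) :=
        sum_le_sum fun p _ => hterm p
    _ = ‖S‖ * ((∑ p, ‖A p v‖ ^ 2 + ∑ p, ‖A p w‖ ^ 2) / 2) := by
        rw [← mul_sum, ← sum_div, sum_add_distrib]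
    _ ≤ ‖S‖ * ((c + c) / 2) := by
        gcongr
        · simpa [hv] using hA v
        · simpa [hw] using hA w
    _ = c * ‖S‖ := by ring

variable [DecidableEq ι] {e : ι → H →L[𝕜] H}
  (he : ∀ i j, e i * e j = if i = j then e i else 0) (hsa : ∀ i, IsSelfAdjoint (e i))
  (hsum : ∑ i, e i = 1)
include he hsa hsum

theorem re_inner_sum_smul_apply_le {m : ι → ℝ} {c : ℝ} (hm : ∀ i, m i ≤ c) (v : H) :
    re ⟪v, (∑ i, (m i : 𝕜) • e i) v⟫_𝕜 ≤ c * ‖v‖ ^ 2 := by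
  have hpos : ∀ i, 0 ≤ re ⟪v, e i v⟫_𝕜 := fun i =>
    (IsPositive.of_isStarProjection ⟨by simpa [IsIdempotentElem] using he i i, hsa i⟩)
      |>.re_inner_nonneg_right v
  calc re ⟪v, (∑ i, (m i : 𝕜) • e i) v⟫_𝕜 = ∑ i, m i * re ⟪v, e i v⟫_𝕜 := by
        simp [_root_.sum_apply, inner_sum, inner_smul_right]
    _ ≤ ∑ i, c * re ⟪v, e i v⟫_𝕜 :=
        sum_le_sum fun i _ => by gcongr; exacts [hpos i, hm i]
    _ = c * ‖v‖ ^ 2 := by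
        rw [← mul_sum, ← map_sum, ← inner_sum, ← _root_.sum_apply, hsum, one_apply_eq_self,
          inner_self_eq_norm_sq]

theorem norm_schurMul_le {M : Matrix ι ι ℝ} (hM : M.PosSemidef) {c : ℝ} (hc : 0 ≤ c)
    (hdiag : ∀ i, M i i ≤ c) (S : H →L[𝕜] H) :
    ‖schurMul e (fun i j => (M i j : 𝕜)) S‖ ≤ c * ‖S‖ := by
  obtain ⟨B, rfl⟩ := hM.exists_eq_conjTranspose_mul_self
  set A : ι → H →L[𝕜] H := fun p => ∑ i, (B p i : 𝕜) • e i
  have hA_star : ∀ p, star (A p) = A p := fun p => by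
    simp [A, star_sum, star_smul, (hsa _).star_eq]
  have hschur : ∀ S,
      schurMul e (fun i j => ((Bᴴ * B) i j : 𝕜)) S = ∑ p, star (A p) * S * A p := by
    intro S
    simp only [hA_star, A, ← schurMul_sum_mul]
    congr
    ext i j
    simp [Matrix.mul_apply]
  rw [hschur]
  refine norm_sum_star_mul_mul_le A hc (fun v => ?_) S
  calc ∑ p, ‖A p v‖ ^ 2 = re ⟪v, (∑ p, star (A p) * 1 * A p) v⟫_𝕜 := by
        simp [apply_norm_sq_eq_inner_adjoint_right, ← star_eq_adjoint, inner_sum]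
    _ ≤ c * ‖v‖ ^ 2 := by
        rw [← hschur, schurMul_one he]
        exact re_inner_sum_smul_apply_le he hsa hsum hdiag v

end ContinuousLinearMap

open ContinuousLinearMap in
theorem stmt_16 (H : Type*) [NormedAddCommGroup H] [InnerProductSpace ℂ H]
    [CompleteSpace H] (k : ℕ) (lam : Fin k → ℝ)
    (hpos : ∀ i, 0 < lam i) (hmono : StrictMono lam)
    (e : Fin k → H →L[ℂ] H)
    (hproj : ∀ i, IsIdempotentElem (e i))
    (hsa : ∀ i, ContinuousLinearMap.adjoint (e i) = e i)
    (horth : ∀ i j, i ≠ j → e i * e j = 0)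
    (hsum : ∑ i, e i = 1)
    (f : ℝ → ℝ) (hf : MonotoneOn f (Set.Ici 0)) (hfpos : ∀ i, 0 < f (lam i))
    (F : H →L[ℂ] H) (hF : F = ∑ i, ((f (lam i) : ℂ)) • e i)
    (x : H →L[ℂ] H)
    (T : H →L[ℂ] H)
    (hT : T = ∑ i, ∑ j, if i ≤ j then e i * x * e j else 0) :
    (2 / 3) * ‖T * F‖ ≤ ‖F * T + T * F‖ ∧ ‖F * T + T * F‖ ≤ 2 * ‖T * F‖ := by
  set a : Fin k → ℝ := fun i => f (lam i)
  have ha_mono : Monotone a := fun i j hij =>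
    hf (hpos i).le (hpos j).le (hmono.monotone hij)
  have he : ∀ i j, e i * e j = if i = j then e i else 0 := fun i j => by
    split_ifs with h
    exacts [h ▸ hproj i, horth i j h]
  have hsa' : ∀ i, IsSelfAdjoint (e i) := fun i => isSelfAdjoint_iff'.2 (hsa i)
  set U : Fin k → Fin k → ℂ := fun i j => if i ≤ j then 1 else 0
  have hT' : T = schurMul e U x := by simp [hT, schurMul, U, ite_smul]
  have hFT : F * T = schurMul e (fun i j => a i * U i j) x := by
    rw [hF, hT', sum_smul_mul_schurMul he]
  have hTF : T * F = schurMul e (fun i j => U i j * a j) x := by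
    rw [hF, hT', schurMul_mul_sum_smul he]
  have hFT_eq : F * T
      = schurMul e (fun i j => ((min (a i) (a j) / (a i + a j) : ℝ) : ℂ)) (F * T + T * F) := by
    rw [hFT, hTF, ← schurMul_add, schurMul_schurMul he]
    congr 1
    ext i j
    by_cases hij : i ≤ j
    · have : (a i : ℂ) + a j ≠ 0 := by exact_mod_cast (add_pos (hfpos i) (hfpos j)).ne'
      simp [U, hij, min_eq_left (ha_mono hij), div_mul_cancel₀ _ this]
    · simp [U, hij]
  have hhalf : ‖F * T‖ ≤ 1 / 2 * ‖F * T + T * F‖ := by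
    conv_lhs => rw [hFT_eq]
    refine norm_schurMul_le he hsa' hsum (Matrix.posSemidef_min_div_add hfpos) (by norm_num)
      (fun i => ?_) _
    have := hfpos i
    rw [Matrix.of_apply, min_self, div_le_iff₀ (by positivity)]
    linarith
  have h_add := norm_add_le (F * T) (T * F)
  have h_sub := norm_sub_le (F * T + T * F) (F * T)
  rw [add_sub_cancel_left] at h_sub
  constructor <;> linarith
end
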